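/- arXiv:1602.00764 — 6 statements merged into one kernel-verified Lean document; each statement's English description precedes it below -/
import Mathlib

section
/- Let n ≥ 2, L ≥ 1, and let (σ_1,…,σ_L) be a configuration in a basic sector S(m) of the n-iTAZRP. Then the quantity (w_2⋯w_n)^{−1} Tr(X_{σ_1}⋯X_{σ_L}) (trace over F^{⊗ n(n−1)/2}) is finite (only finitely many nonzero terms contribute) and is a homogeneous polynomial in w_1,…,w_n of total degree (n−1)(L−1) with coefficients in ℤ_{≥0}. -/
open scoped BigOperators

namespace ITAZRP

/-- Cyclic successor on `Fin L` (site `i+1` on the periodic chain `ℤ_L`). -/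
def cyc {L : ℕ} (i : Fin L) : Fin L := ⟨(i.val + 1) % L, Nat.mod_lt _ i.pos⟩

/-- Cyclic subtraction of a natural number on `Fin L`. -/
def csub {L : ℕ} (s : Fin L) (d : ℕ) : Fin L :=
  ⟨(s.val + (L - d % L)) % L, Nat.mod_lt _ s.pos⟩

/-- Multiplicity representation → multiset representation. -/
def toMul {m : ℕ} (α : Fin m → ℕ) : Multiset (Fin m) :=
  ∑ a : Fin m, Multiset.replicate (α a) a

/-- Multiset representation → multiplicity representation. -/
def ofMul {m : ℕ} (s : Multiset (Fin m)) : Fin m → ℕ := fun a => s.count a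

/-- The relation `(α,β) > (γ,δ)`: there is `k ∈ [1,r]` with
`γ = α ∪ {β_k,…,β_r}` and `δ = (β_1,…,β_{k-1})`; equivalently `β` splits as
`δ + t` with `t ≠ 0`, every element of `δ` below every element of `t`,
and `γ = α + t`. -/
def GtRel {m : ℕ} (α β γ δ : Multiset (Fin m)) : Prop :=
  ∃ t : Multiset (Fin m), t ≠ 0 ∧ β = δ + t ∧ γ = α + t ∧ ∀ x ∈ δ, ∀ y ∈ t, x ≤ y

theorem GtRel.sub_nonempty {m : ℕ} {α β γ δ : Multiset (Fin m)} (h : GtRel α β γ δ) :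
    (γ - α).toFinset.Nonempty := by
  obtain ⟨t, ht, -, hγ, -⟩ := h
  rw [hγ, add_tsub_cancel_left]
  exact Multiset.toFinset_nonempty.mpr ht

/-- Minimum of a nonempty multiset over `Fin m`. -/
def msetMin {m : ℕ} (t : Multiset (Fin m)) (h : t.toFinset.Nonempty) : Fin m :=
  t.toFinset.min' h

/-- `g(β) = w_1 β^1 + ⋯ + w_n β^n`. -/
noncomputable def gVal {m : ℕ} (w : Fin m → ℝ) (β : Multiset (Fin m)) : ℝ := (β.map w).sum

open Classical in
/-- The transition rate `w_{min(γ∖α)}` when `(α,β) > (γ,δ)`, and `0` otherwise. -/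
noncomputable def wRateM {m : ℕ} (w : Fin m → ℝ) (α β γ δ : Multiset (Fin m)) : ℝ :=
  if h : GtRel α β γ δ then w (msetMin (γ - α) h.sub_nonempty) else 0

open Classical in
/-- The local Markov matrix entry `h^{γ,δ}_{α,β}` in multiset representation. -/
noncomputable def hEntM {m : ℕ} (w : Fin m → ℝ) (α β γ δ : Multiset (Fin m)) : ℝ :=
  if h : GtRel α β γ δ then w (msetMin (γ - α) h.sub_nonempty)
  else if α = γ ∧ β = δ then -(gVal w β) else 0

/-- The local Markov matrix entry `h^{γ,δ}_{α,β}` in multiplicity representation. -/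
noncomputable def hEnt {m : ℕ} (w : Fin m → ℝ) (α β γ δ : Fin m → ℕ) : ℝ :=
  hEntM w (toMul α) (toMul β) (toMul γ) (toMul δ)


/-- Product of two (possibly infinite) matrices, entries summed by `tsum`. -/
noncomputable def matMul {ι : Type*} (X Y : ι → ι → ℝ) : ι → ι → ℝ :=
  fun s t => ∑' u, X s u * Y u t

/-- Trace of a (possibly infinite) matrix, summed by `tsum`. -/
noncomputable def matTrace {ι : Type*} (X : ι → ι → ℝ) : ℝ := ∑' s, X s s

open Classical in
/-- Ordered product `f 0 * f 1 * ⋯ * f (L-1)` of matrices. -/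
noncomputable def matProd {ι : Type*} : (L : ℕ) → (Fin L → (ι → ι → ℝ)) → (ι → ι → ℝ)
  | 0, _ => fun s t => if s = t then 1 else 0
  | (L + 1), f => matMul (f 0) (matProd L fun i => f i.succ)

/-- The diagonal part `Σ_{r=1}^{n-1} θ(α^{r+1} = ⋯ = α^n = 0) ρ_r K_r + ρ_n K_n`
of the operator `A`, evaluated at the Fock basis vector labelled `u`;
here `ρ` is the rate attached to each `K_r`. -/
noncomputable def Dval (Nm : ℕ) (ρ : Fin (Nm + 1) → ℝ) (α : Fin (Nm + 1) → ℕ)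
    (u : Fin Nm → ℕ) : ℝ :=
  (∑ r : Fin Nm,
      if (∀ b : Fin (Nm + 1), (r : ℕ) < (b : ℕ) → α b = 0) ∧
          (∀ j : Fin Nm, j < r → u j = 0) ∧ u r ≠ 0
      then ρ r.castSucc else 0)
    + (if ∀ j, u j = 0 then ρ (Fin.last Nm) else 0)

open Classical in
/-- Matrix entries of `P_+(μ) (Σ_r θ(⋯) ρ_r K_r + ρ_n K_n) P_-(ᾱ)`
on `F^{⊗ Nm}` (where `n = Nm + 1`). -/
noncomputable def AentGen (Nm : ℕ) (ρ : Fin (Nm + 1) → ℝ) (μ : Fin Nm → ℕ)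
    (α : Fin (Nm + 1) → ℕ) : (Fin Nm → ℕ) → (Fin Nm → ℕ) → ℝ :=
  fun s t =>
    if (∀ j, μ j ≤ s j) ∧ (∀ j, t j = s j - μ j + α j.castSucc)
    then Dval Nm ρ α (fun j => s j - μ j) else 0

/-- Matrix entries of the operator `A^{(n)}_{μ,α}` with `n = Nm + 1`. -/
noncomputable def Aent (Nm : ℕ) (w : Fin (Nm + 1) → ℝ) (μ : Fin Nm → ℕ)
    (α : Fin (Nm + 1) → ℕ) : (Fin Nm → ℕ) → (Fin Nm → ℕ) → ℝ :=
  AentGen Nm w μ α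

/-- Matrix entries of the operator `Â^{(n)}_{μ,α}` with `n = Nm + 1`:
the rate `w_r` is replaced by `w_r (w_r + g(α))`. -/
noncomputable def AhatEnt (Nm : ℕ) (w : Fin (Nm + 1) → ℝ) (μ : Fin Nm → ℕ)
    (α : Fin (Nm + 1) → ℕ) : (Fin Nm → ℕ) → (Fin Nm → ℕ) → ℝ :=
  AentGen Nm (fun r => w r * (w r + gVal w (toMul α))) μ α

/-- Index set of the Fock space `F^{⊗ n(n-1)/2}` (`n = N+1`), split into blocks of
sizes `1, 2, …, N`: block `a` carries the factor `F^{⊗ (a+1)}` on which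
`A^{(a+2)}` acts. -/
abbrev BigIdx (N : ℕ) := (a : Fin N) → (Fin (a.val + 1) → ℕ)

/-- Extend a tuple `(μ^{(1)}, …, μ^{(N)})` by `μ^{(N+1)} := σ`. -/
def mextend (N : ℕ) (μ : BigIdx N) (σ : Fin (N + 1) → ℕ) :
    (k : Fin (N + 1)) → Fin (k.val + 1) → ℕ :=
  fun k j => if h : (k : ℕ) < N then μ ⟨k, h⟩ j
    else σ (Fin.castLE (Nat.succ_le_of_lt k.isLt) j)

/-- Matrix entries of
`X_σ = Σ_{μ^{(1)},…,μ^{(N)}} A^{(2)}_{μ^{(1)},μ^{(2)}} ⊗ ⋯ ⊗ A^{(N+1)}_{μ^{(N)},σ}`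
acting on `F^{⊗ N(N+1)/2}` (with `n = N + 1` species). -/
noncomputable def Xent (N : ℕ) (w : Fin (N + 1) → ℝ) (σ : Fin (N + 1) → ℕ) :
    BigIdx N → BigIdx N → ℝ :=
  fun s t => ∑' μ : BigIdx N, ∏ a : Fin N,
    Aent (a.val + 1) (fun b => w (Fin.castLE (Nat.succ_le_succ a.isLt) b))
      (mextend N μ σ ⟨a.val, Nat.lt_succ_of_lt a.isLt⟩)
      (mextend N μ σ ⟨a.val + 1, Nat.succ_lt_succ a.isLt⟩)
      (s a) (t a)

/-- A configuration of the `m`-species process on the periodic chain `ℤ_L`. -/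
abbrev Config (L m : ℕ) := Fin L → (Fin m → ℕ)

/-- Membership in the sector `S(mm)`: the total multiplicity of each species is `mm`. -/
def inSector {L m : ℕ} (σ : Config L m) (mm : Fin m → ℕ) : Prop :=
  ∀ a, (∑ i, σ i a) = mm a

/-- Replace the local states at the cyclically adjacent sites `i, i+1` by `a, b`. -/
def update2 {L m : ℕ} (σ : Config L m) (i : Fin L) (a b : Fin m → ℕ) : Config L m :=
  fun j => if j = i then a else if j = cyc i then b else σ j

/-- The left hand side
`Σ_{i ∈ ℤ_L} Σ_{σ'_i, σ'_{i+1}} h^{σ_i,σ_{i+1}}_{σ'_i,σ'_{i+1}} P(σ_1,…,σ'_i,σ'_{i+1},…,σ_L)`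
of the stationarity equation. -/
noncomputable def stationaryTerm {L m : ℕ} (w : Fin m → ℝ) (P : Config L m → ℝ)
    (σ : Config L m) : ℝ :=
  ∑ i : Fin L, ∑' p : (Fin m → ℕ) × (Fin m → ℕ),
    hEnt w p.1 p.2 (σ i) (σ (cyc i)) * P (update2 σ i p.1 p.2)

/-- `P` satisfies the stationarity (steady state) equation on the sector `S(mm)`. -/
def IsStationary {L m : ℕ} (w : Fin m → ℝ) (P : Config L m → ℝ) (mm : Fin m → ℕ) : Prop :=
  ∀ σ : Config L m, inSector σ mm → stationaryTerm w P σ = 0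

/-- `ℓ_a = m_1 + ⋯ + m_a`. -/
def ell {m : ℕ} (mm : Fin m → ℕ) (a : Fin m) : ℕ :=
  ∑ b : Fin m, if b ≤ a then mm b else 0

/-- The family `Q` of polynomials in `w_1,…,w_m` is *the* steady state probability of the
`m`-species iTAZRP in the sector `S(mm)`: it satisfies the stationarity equation for all
positive rates, is homogeneous of degree `(m-1)(L-1)` with coefficients in `ℤ_{≥0}`, and its
values at `w_1 = ⋯ = w_m = 1` sum to `Π_a C(L-1+ℓ_a, ℓ_a)` over the sector. -/
noncomputable def IsSteadyState (L m : ℕ) (mm : Fin m → ℕ)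
    (Q : Config L m → MvPolynomial (Fin m) ℝ) : Prop :=
  (∀ w : Fin m → ℝ, (∀ a, 0 < w a) →
      IsStationary w (fun τ => MvPolynomial.eval w (Q τ)) mm)
  ∧ (∀ τ : Config L m, inSector τ mm → (Q τ).IsHomogeneous ((m - 1) * (L - 1)))
  ∧ (∀ τ : Config L m, inSector τ mm → ∀ d : (Fin m) →₀ ℕ, ∃ c : ℕ, (Q τ).coeff d = (c : ℝ))
  ∧ (∑' τ : {τ : Config L m // inSector τ mm},
        MvPolynomial.eval (fun _ => (1 : ℝ)) (Q τ.val))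
      = ∏ a : Fin m, ((L - 1 + ell mm a).choose (ell mm a) : ℝ)

/-- The vector `h_{i,i+1} |σ⟩ = Σ_{γ,δ} h^{γ,δ}_{σ_i,σ_{i+1}} |…,γ,δ,…⟩`, the target pairs
`(γ,δ)` being enumerated by the splitting position `k` of the sorted word of `σ_{i+1}`. -/
noncomputable def hLocAction {L : ℕ} (N : ℕ) (w : Fin (N + 1) → ℝ)
    (σ : Config L (N + 1)) (i : Fin L) : (Config L (N + 1)) →₀ ℝ :=
  (∑ k ∈ Finset.range ((toMul (σ (cyc i))).sort (· ≤ ·)).length,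
      w (((toMul (σ (cyc i))).sort (· ≤ ·)).getD k 0) •
        Finsupp.single
          (update2 σ i
            (ofMul (toMul (σ i) + ↑(((toMul (σ (cyc i))).sort (· ≤ ·)).drop k)))
            (ofMul (↑(((toMul (σ (cyc i))).sort (· ≤ ·)).take k))))
          (1 : ℝ))
    - gVal w (toMul (σ (cyc i))) • Finsupp.single σ (1 : ℝ)

/-- The Markov matrix `H = Σ_{i ∈ ℤ_L} h_{i,i+1}` as a linear endomorphism of the
free vector space on the set of configurations. -/
noncomputable def Hop (N L : ℕ) (w : Fin (N + 1) → ℝ) :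
    ((Config L (N + 1)) →₀ ℝ) →ₗ[ℝ] ((Config L (N + 1)) →₀ ℝ) :=
  Finsupp.linearCombination ℝ (fun σ => ∑ i : Fin L, hLocAction N w σ i)

/-- The cyclic shift `C : |σ_1,…,σ_L⟩ ↦ |σ_L,σ_1,…,σ_{L-1}⟩`. -/
noncomputable def Cop (N L : ℕ) :
    ((Config L (N + 1)) →₀ ℝ) →ₗ[ℝ] ((Config L (N + 1)) →₀ ℝ) :=
  Finsupp.lmapDomain ℝ ℝ (fun σ : Config L (N + 1) => fun j => σ (csub j 1))

/-- The state of the pairing procedure of the TAZRP embedding rule: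
`u j` = number of yet uncolored dots in bottom box `j`;
`done j` = colors of the colored dots in bottom box `j`;
`cross i` = colors of the H-lines crossing the border between bottom boxes `i` and `i+1`. -/
structure PairState (L n : ℕ) where
  u : Fin L → ℕ
  done : Fin L → Multiset (Fin n)
  cross : Fin L → Multiset (Fin n)

open Classical in
/-- Process one species-`c` particle sitting in top box `p`: its H-line starts at the
left adjacent bottom box `p-1` and proceeds left (cyclically) until it first meets a box
with an uncolored dot, which it colors; the borders it crosses are recorded. -/
noncomputable def step {L n : ℕ} (st : PairState L n) (c : Fin n) (p : Fin L) : PairState L n :=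
  match (List.range L).find? (fun d => decide (0 < st.u (csub (csub p 1) d))) with
  | none => st
  | some d =>
      { u := Function.update st.u (csub (csub p 1) d) (st.u (csub (csub p 1) d) - 1)
        done := Function.update st.done (csub (csub p 1) d) (c ::ₘ st.done (csub (csub p 1) d))
        cross := fun j =>
          if ∃ e ∈ Finset.Icc 1 d, j = csub (csub p 1) e then c ::ₘ st.cross j
          else st.cross j }

/-- The particles of the top row, listed species by species in increasing order. -/
def particleList {L : ℕ} (n : ℕ) (σ : Fin L → Multiset (Fin n)) : List (Fin n × Fin L) :=
  (List.finRange n).flatMap fun b =>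
    (List.finRange L).flatMap fun i => List.replicate ((σ i).count b) (b, i)

/-- Run the whole pairing procedure of the embedding rule for the multiline row `x`
(the dots) below the configuration `σ` (the particles). -/
noncomputable def runPairing {L n : ℕ} (x : Fin L → ℕ) (σ : Fin L → Multiset (Fin n)) : PairState L n :=
  (particleList n σ).foldl (fun st bp => step st bp.1 bp.2) ⟨x, fun _ => 0, fun _ => 0⟩

/-- The TAZRP embedding rule `Φ_x(σ)`: colored dots keep their color, remaining
uncolored dots become particles of species `a`. -/
noncomputable def PhiAt {L n : ℕ} (a : Fin n) (x : Fin L → ℕ) (σ : Fin L → Multiset (Fin n)) :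
    Fin L → Multiset (Fin n) :=
  fun j => (runPairing x σ).done j + Multiset.replicate ((runPairing x σ).u j) a

/-- The factor `η_i`: `w_a` if no H-line crosses the border between bottom boxes `i` and
`i+1`, and `w_{min(col_i)}` otherwise. -/
noncomputable def etaAt {L n : ℕ} (a : Fin n) (w : Fin n → ℝ) (x : Fin L → ℕ)
    (σ : Fin L → Multiset (Fin n)) (i : Fin L) : ℝ :=
  if h : (runPairing x σ).cross i = 0 then w a
  else w (msetMin ((runPairing x σ).cross i) (Multiset.toFinset_nonempty.mpr h))

/-- The product `η_1 ⋯ η_L`. -/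
noncomputable def etaProd {L n : ℕ} (a : Fin n) (w : Fin n → ℝ) (x : Fin L → ℕ)
    (σ : Fin L → Multiset (Fin n)) : ℝ :=
  ∏ i : Fin L, etaAt a w x σ i

/-- `ϖ_x(σ) = w_a^{-1} η_1 ⋯ η_L`. -/
noncomputable def varpiAt {L n : ℕ} (a : Fin n) (w : Fin n → ℝ) (x : Fin L → ℕ)
    (σ : Fin L → Multiset (Fin n)) : ℝ :=
  (w a)⁻¹ * etaProd a w x σ

/-- The tower `σ^1, σ^2, …` of configurations: `σ^1` is the 1-species configuration given
by `x^1`, and `σ^{a} = Φ_{x^{a}}(σ^{a-1})` (indices `0,…,N` in Lean). -/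
noncomputable def sigmaSeq {L : ℕ} (N : ℕ) (x : Fin (N + 1) → Fin L → ℕ) :
    ℕ → (Fin L → Multiset (Fin (N + 1)))
  | 0 => fun i => Multiset.replicate (x 0 i) (0 : Fin (N + 1))
  | (k + 1) =>
      if h : k + 1 < N + 1 then
        PhiAt (⟨k + 1, h⟩ : Fin (N + 1)) (x ⟨k + 1, h⟩) (sigmaSeq N x k)
      else sigmaSeq N x k

/-- The projection `π : B(m) → S(m)`, `π(x) = σ^n`. -/
noncomputable def piMap {L : ℕ} (N : ℕ) (x : Fin (N + 1) → Fin L → ℕ) : Config L (N + 1) :=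
  fun i => ofMul (sigmaSeq N x N i)

/-- The weight `W(x) = Π_{a=2}^n ϖ_{x^a}(σ^{a-1})`. -/
noncomputable def Wweight {L : ℕ} (N : ℕ) (w : Fin (N + 1) → ℝ)
    (x : Fin (N + 1) → Fin L → ℕ) : ℝ :=
  ∏ r : Fin N, varpiAt r.succ w (x r.succ) (sigmaSeq N x r.val)

open Classical in
/-- The local Markov matrix entry `h^{γ,δ}_{α,β}` for the single species (`n = 1`) TAZRP,
where a local state is just the number of particles occupying the site. -/
noncomputable def h1 (w1 : ℝ) (α β γ δ : ℕ) : ℝ :=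
  if ∃ k, 1 ≤ k ∧ k ≤ β ∧ γ = α + β - k + 1 ∧ δ = k - 1 then w1
  else if α = γ ∧ β = δ then -(w1 * β) else 0



section Aux
lemma cyc_val {L : ℕ} (i : Fin L) : (cyc i).val = if i.val + 1 = L then 0 else i.val + 1 := by
  have hi := i.isLt
  simp only [cyc]
  split
  · simp [*]
  · exact Nat.mod_eq_of_lt (by omega)

lemma cyc_bijective {L : ℕ} : Function.Bijective (cyc (L := L)) := by
  rw [Finite.injective_iff_bijective.symm]
  intro i j h
  have hi := i.isLt; have hj := j.isLt
  have h' : (cyc i).val = (cyc j).val := congrArg Fin.val h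
  rw [cyc_val, cyc_val] at h'
  apply Fin.ext
  split at h' <;> split at h' <;> omega

lemma cyc_iterate_val {L : ℕ} (i : Fin L) (k : ℕ) :
    ((cyc^[k]) i).val = (i.val + k) % L := by
  induction k with
  | zero => simp [Nat.mod_eq_of_lt i.isLt]
  | succ k ih =>
      rw [Function.iterate_succ_apply']
      show ((cyc^[k] i).val + 1) % L = _
      rw [ih, Nat.mod_add_mod, ← Nat.add_assoc]

lemma cyc_reaches {L : ℕ} (i0 i : Fin L) : ∃ k < L, (cyc^[k]) i0 = i := by
  have hL : 0 < L := i.pos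
  refine ⟨(i.val + L - i0.val) % L, Nat.mod_lt _ hL, ?_⟩
  apply Fin.ext
  rw [cyc_iterate_val, Nat.add_mod, Nat.mod_mod_of_dvd _ dvd_rfl, ← Nat.add_mod]
  have : i0.val + (i.val + L - i0.val) = i.val + L := by omega
  rw [this, Nat.add_mod_right, Nat.mod_eq_of_lt i.isLt]











section Core

variable {N L : ℕ} {mm : Fin (N + 1) → ℕ} {σ : Config L (N + 1)}
  {μd q : Fin L → BigIdx N}

/-- `Aout i a` : the outgoing α of block `a` at site `i`. -/
def AoutF (σ : Config L (N + 1)) (μd : Fin L → BigIdx N) (i : Fin L) (a : Fin N) :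
    Fin (a.val + 2) → ℕ :=
  mextend N (μd i) (σ i) ⟨a.val + 1, Nat.succ_lt_succ a.isLt⟩

lemma AoutF_lt (i : Fin L) (a : Fin N) (h : a.val + 1 < N) (j : Fin (a.val + 2)) :
    AoutF σ μd i a j = μd i ⟨a.val + 1, h⟩ j := by
  simp only [AoutF, mextend]
  rw [dif_pos h]

lemma AoutF_eq (i : Fin L) (a : Fin N) (h : a.val + 1 = N) (j : Fin (a.val + 2)) :
    AoutF σ μd i a j = σ i (Fin.castLE (by omega) j) := by
  simp only [AoutF, mextend]
  rw [dif_neg (by omega)]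

variable (hσ : inSector σ mm)
  (hC2 : ∀ (i : Fin L) (a : Fin N) (j : Fin (a.val + 1)),
    q (cyc i) a j + μd i a j = q i a j + AoutF σ μd i a j.castSucc)

include hC2 in
lemma core_step (a : Fin N) (j : Fin (a.val + 1)) :
    ∑ i, μd i a j = ∑ i, AoutF σ μd i a j.castSucc := by
  have hbij : ∑ i, q (cyc i) a j = ∑ i, q i a j :=
    Function.Bijective.sum_comp cyc_bijective (fun i => q i a j)
  have := Finset.sum_congr rfl (fun i (_ : i ∈ Finset.univ) => hC2 i a j)
  rw [Finset.sum_add_distrib, Finset.sum_add_distrib, hbij] at this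
  omega

include hσ hC2 in
lemma core_musum_aux (k : ℕ) : ∀ (a : Fin N), N = a.val + 1 + k →
    ∀ (j : Fin (a.val + 1)),
      ∑ i, μd i a j = mm (Fin.castLE (Nat.succ_le_succ (Nat.le_of_lt a.isLt)) j) := by
  induction k with
  | zero =>
      intro a ha j
      rw [core_step hC2 a j]
      have : ∀ i, AoutF σ μd i a j.castSucc = σ i (Fin.castLE (by omega) j.castSucc) :=
        fun i => AoutF_eq i a ha.symm _
      rw [Finset.sum_congr rfl (fun i _ => this i)]
      rw [hσ _]
      congr 1
  | succ k ih =>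
      intro a ha j
      have hlt : a.val + 1 < N := by omega
      rw [core_step hC2 a j]
      have : ∀ i, AoutF σ μd i a j.castSucc = μd i ⟨a.val + 1, hlt⟩ j.castSucc :=
        fun i => AoutF_lt i a hlt _
      rw [Finset.sum_congr rfl (fun i _ => this i)]
      have := ih ⟨a.val + 1, hlt⟩ (by simpa using by omega) j.castSucc
      rw [this]
      congr 1

include hσ hC2 in
lemma core_musum (a : Fin N) (j : Fin (a.val + 1)) :
    ∑ i, μd i a j = mm (Fin.castLE (Nat.succ_le_succ (Nat.le_of_lt a.isLt)) j) :=
  core_musum_aux hσ hC2 (N - 1 - a.val) a (by omega) j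

include hσ hC2 in
lemma core_mu_le (i : Fin L) (a : Fin N) (j : Fin (a.val + 1)) :
    μd i a j ≤ mm (Fin.castLE (Nat.succ_le_succ (Nat.le_of_lt a.isLt)) j) := by
  rw [← core_musum hσ hC2 a j]
  exact Finset.single_le_sum (f := fun i => μd i a j) (fun _ _ => Nat.zero_le _) (Finset.mem_univ i)

include hσ hC2 in
lemma core_exists (hmm : ∀ b, 1 ≤ mm b) (a : Fin N) :
    ∃ i, AoutF σ μd i a (Fin.last (a.val + 1)) ≠ 0 := by
  by_contra hall
  push_neg at hall
  have hz : ∑ i, AoutF σ μd i a (Fin.last (a.val + 1)) = 0 :=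
    Finset.sum_eq_zero (fun i _ => hall i)
  by_cases h : a.val + 1 < N
  · have : ∀ i, AoutF σ μd i a (Fin.last (a.val + 1)) =
        μd i ⟨a.val + 1, h⟩ (Fin.last (a.val + 1)) := fun i => AoutF_lt i a h _
    rw [Finset.sum_congr rfl (fun i _ => this i),
      core_musum hσ hC2 ⟨a.val + 1, h⟩ (Fin.last (a.val + 1))] at hz
    exact absurd hz (by have := hmm (Fin.castLE (Nat.succ_le_succ (Nat.le_of_lt h))
      (Fin.last (a.val + 1))); omega)
  · have he : a.val + 1 = N := by omega
    have : ∀ i, AoutF σ μd i a (Fin.last (a.val + 1)) =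
        σ i (Fin.castLE (by omega) (Fin.last (a.val + 1))) := fun i => AoutF_eq i a he _
    rw [Finset.sum_congr rfl (fun i _ => this i), hσ _] at hz
    exact absurd hz (by have := hmm (Fin.castLE (by omega) (Fin.last (a.val + 1))); omega)

include hσ in
lemma sigma_le_mm (i : Fin L) (b : Fin (N + 1)) : σ i b ≤ mm b := by
  rw [← hσ b]
  exact Finset.single_le_sum (f := fun i => σ i b) (fun _ _ => Nat.zero_le _) (Finset.mem_univ i)

include hσ hC2 in
lemma core_aout_le (Mtot : ℕ) (hM : Mtot = ∑ b, mm b) (i : Fin L) (a : Fin N)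
    (j : Fin (a.val + 2)) : AoutF σ μd i a j ≤ Mtot := by
  subst hM
  by_cases h : a.val + 1 < N
  · rw [AoutF_lt i a h]
    calc μd i ⟨a.val + 1, h⟩ j ≤ _ := core_mu_le hσ hC2 i ⟨a.val + 1, h⟩ j
    _ ≤ ∑ b, mm b := Finset.single_le_sum (fun _ _ => Nat.zero_le _) (Finset.mem_univ _)
  · rw [AoutF_eq i a (by omega)]
    calc σ i _ ≤ mm _ := sigma_le_mm hσ i _
    _ ≤ ∑ b, mm b := Finset.single_le_sum (fun _ _ => Nat.zero_le _) (Finset.mem_univ _)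

include hσ hC2 in
lemma core_q_bound
    (hC1 : ∀ (i : Fin L) (a : Fin N) (j : Fin (a.val + 1)), μd i a j ≤ q i a j)
    (hC3 : ∀ (i : Fin L) (a : Fin N), AoutF σ μd i a (Fin.last (a.val + 1)) ≠ 0 →
      ∀ j, q i a j = μd i a j)
    (hmm : ∀ b, 1 ≤ mm b)
    (i : Fin L) (a : Fin N) (j : Fin (a.val + 1)) :
    q i a j ≤ (L + 1) * (∑ b, mm b) := by
  set Mtot := ∑ b, mm b with hM
  obtain ⟨i0, hi0⟩ := core_exists hσ hC2 hmm a
  have hbase : ∀ j', q i0 a j' ≤ Mtot := by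
    intro j'
    rw [hC3 i0 a hi0 j']
    calc μd i0 a j' ≤ _ := core_mu_le hσ hC2 i0 a j'
    _ ≤ Mtot := Finset.single_le_sum (fun _ _ => Nat.zero_le _) (Finset.mem_univ _)
  have hstep : ∀ (i' : Fin L) (j' : Fin (a.val + 1)),
      q (cyc i') a j' ≤ q i' a j' + Mtot := by
    intro i' j'
    have := hC2 i' a j'
    have := core_aout_le hσ hC2 Mtot hM i' a j'.castSucc
    omega
  have hiter : ∀ (k : ℕ) (j' : Fin (a.val + 1)),
      q ((cyc^[k]) i0) a j' ≤ Mtot + k * Mtot := by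
    intro k
    induction k with
    | zero => simpa using hbase
    | succ k ih =>
        intro j'
        rw [Function.iterate_succ_apply']
        calc q (cyc ((cyc^[k]) i0)) a j' ≤ q ((cyc^[k]) i0) a j' + Mtot := hstep _ _
        _ ≤ Mtot + k * Mtot + Mtot := by have := ih j'; omega
        _ = Mtot + (k + 1) * Mtot := by ring
  obtain ⟨k, hk, hki⟩ := cyc_reaches i0 i
  have := hiter k j
  rw [hki] at this
  have hkM : k * Mtot ≤ L * Mtot := Nat.mul_le_mul_right _ (by omega)
  calc q i a j ≤ Mtot + k * Mtot := this
  _ ≤ Mtot + L * Mtot := by omega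
  _ = (L + 1) * Mtot := by ring

end Core




open MvPolynomial

noncomputable abbrev Pm (N : ℕ) := MvPolynomial (Fin (N + 1)) ℝ

noncomputable def DvalP (N Nm : ℕ) (ρ : Fin (Nm + 1) → Fin (N + 1)) (α : Fin (Nm + 1) → ℕ)
    (u : Fin Nm → ℕ) : Pm N :=
  (∑ r : Fin Nm,
      if (∀ b : Fin (Nm + 1), (r : ℕ) < (b : ℕ) → α b = 0) ∧
          (∀ j : Fin Nm, j < r → u j = 0) ∧ u r ≠ 0
      then MvPolynomial.X (ρ r.castSucc) else 0)
    + (if ∀ j, u j = 0 then MvPolynomial.X (ρ (Fin.last Nm)) else 0)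

lemma eval_DvalP {N Nm : ℕ} (ρ : Fin (Nm + 1) → Fin (N + 1)) (α : Fin (Nm + 1) → ℕ)
    (u : Fin Nm → ℕ) (w : Fin (N + 1) → ℝ) :
    MvPolynomial.eval w (DvalP N Nm ρ α u) = Dval Nm (fun b => w (ρ b)) α u := by
  simp only [DvalP, Dval, map_add, map_sum, apply_ite (MvPolynomial.eval w),
    MvPolynomial.eval_X, map_zero]

lemma dval_cond_false {Nm : ℕ} {α : Fin (Nm + 1) → ℕ} (hα : α (Fin.last Nm) ≠ 0)
    (r : Fin Nm) (u : Fin Nm → ℕ) :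
    ¬ ((∀ b : Fin (Nm + 1), (r : ℕ) < (b : ℕ) → α b = 0) ∧
        (∀ j : Fin Nm, j < r → u j = 0) ∧ u r ≠ 0) := by
  rintro ⟨h1, -, -⟩
  exact hα (h1 (Fin.last Nm) (by simpa using r.isLt))

lemma Dval_of_last {Nm : ℕ} (ρ : Fin (Nm + 1) → ℝ) {α : Fin (Nm + 1) → ℕ}
    (hα : α (Fin.last Nm) ≠ 0) (u : Fin Nm → ℕ) :
    Dval Nm ρ α u = if ∀ j, u j = 0 then ρ (Fin.last Nm) else 0 := by
  unfold Dval
  rw [Finset.sum_eq_zero (fun r _ => if_neg (dval_cond_false hα r u)), zero_add]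

lemma DvalP_of_last {N Nm : ℕ} (ρ : Fin (Nm + 1) → Fin (N + 1)) {α : Fin (Nm + 1) → ℕ}
    (hα : α (Fin.last Nm) ≠ 0) (u : Fin Nm → ℕ) :
    DvalP N Nm ρ α u = if ∀ j, u j = 0 then MvPolynomial.X (ρ (Fin.last Nm)) else 0 := by
  unfold DvalP
  rw [Finset.sum_eq_zero (fun r _ => if_neg (dval_cond_false hα r u)), zero_add]

lemma DvalP_u_eq_zero {N Nm : ℕ} {ρ : Fin (Nm + 1) → Fin (N + 1)} {α : Fin (Nm + 1) → ℕ}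
    (hα : α (Fin.last Nm) ≠ 0) {u : Fin Nm → ℕ} (h : DvalP N Nm ρ α u ≠ 0) :
    ∀ j, u j = 0 := by
  rw [DvalP_of_last ρ hα u] at h
  by_contra hc
  rw [if_neg hc] at h
  exact h rfl

open Classical in
noncomputable def AentPP (N Nm : ℕ) (ρ : Fin (Nm + 1) → Fin (N + 1)) (μ : Fin Nm → ℕ)
    (α : Fin (Nm + 1) → ℕ) : (Fin Nm → ℕ) → (Fin Nm → ℕ) → Pm N :=
  fun s t =>
    if (∀ j, μ j ≤ s j) ∧ (∀ j, t j = s j - μ j + α j.castSucc)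
    then DvalP N Nm ρ α (fun j => s j - μ j) else 0

lemma eval_AentPP {N Nm : ℕ} (ρ : Fin (Nm + 1) → Fin (N + 1)) (μ : Fin Nm → ℕ)
    (α : Fin (Nm + 1) → ℕ) (s t : Fin Nm → ℕ) (w : Fin (N + 1) → ℝ) :
    MvPolynomial.eval w (AentPP N Nm ρ μ α s t) = AentGen Nm (fun b => w (ρ b)) μ α s t := by
  unfold AentPP AentGen
  split_ifs
  · exact eval_DvalP ρ α _ w
  · exact map_zero _

lemma AentPP_cond {N Nm : ℕ} {ρ : Fin (Nm + 1) → Fin (N + 1)} {μ : Fin Nm → ℕ}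
    {α : Fin (Nm + 1) → ℕ} {s t : Fin Nm → ℕ} (h : AentPP N Nm ρ μ α s t ≠ 0) :
    ((∀ j, μ j ≤ s j) ∧ (∀ j, t j = s j - μ j + α j.castSucc)) ∧
      DvalP N Nm ρ α (fun j => s j - μ j) ≠ 0 := by
  unfold AentPP at h
  split_ifs at h with hc
  · exact ⟨hc, h⟩
  · exact absurd rfl h

lemma AentPP_extract {N Nm : ℕ} {ρ : Fin (Nm + 1) → Fin (N + 1)} {μ : Fin Nm → ℕ}
    {α : Fin (Nm + 1) → ℕ} {s t : Fin Nm → ℕ} (hα : α (Fin.last Nm) ≠ 0)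
    (h : AentPP N Nm ρ μ α s t ≠ 0) :
    AentPP N Nm ρ μ α s t = MvPolynomial.X (ρ (Fin.last Nm)) := by
  obtain ⟨hc, hd⟩ := AentPP_cond h
  have hu := DvalP_u_eq_zero hα hd
  unfold AentPP
  rw [if_pos hc, DvalP_of_last ρ hα _, if_pos hu]

lemma AentPP_homog {N Nm : ℕ} (ρ : Fin (Nm + 1) → Fin (N + 1)) (μ : Fin Nm → ℕ)
    (α : Fin (Nm + 1) → ℕ) (s t : Fin Nm → ℕ) :
    (AentPP N Nm ρ μ α s t).IsHomogeneous 1 := by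
  unfold AentPP
  split_ifs
  · unfold DvalP
    apply MvPolynomial.IsHomogeneous.add
    · apply MvPolynomial.IsHomogeneous.sum
      intro r _
      split_ifs
      · exact MvPolynomial.isHomogeneous_X _ _
      · exact MvPolynomial.isHomogeneous_zero _ _ _
    · split_ifs
      · exact MvPolynomial.isHomogeneous_X _ _
      · exact MvPolynomial.isHomogeneous_zero _ _ _
  · exact MvPolynomial.isHomogeneous_zero _ _ _

/-- The subsemiring of polynomials with natural number coefficients. -/
noncomputable def NatSR (N : ℕ) : Subsemiring (Pm N) :=
  (MvPolynomial.map (Nat.castRingHom ℝ) :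
    MvPolynomial (Fin (N + 1)) ℕ →+* Pm N).rangeS

lemma X_mem_NatSR {N : ℕ} (b : Fin (N + 1)) : (MvPolynomial.X b : Pm N) ∈ NatSR N :=
  ⟨MvPolynomial.X b, MvPolynomial.map_X _ b⟩

lemma coeff_of_mem_NatSR {N : ℕ} {p : Pm N} (hp : p ∈ NatSR N) (d : (Fin (N + 1)) →₀ ℕ) :
    ∃ c : ℕ, p.coeff d = (c : ℝ) := by
  obtain ⟨q, rfl⟩ := hp
  exact ⟨q.coeff d, MvPolynomial.coeff_map _ _ _⟩

lemma AentPP_mem_NatSR {N Nm : ℕ} (ρ : Fin (Nm + 1) → Fin (N + 1)) (μ : Fin Nm → ℕ)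
    (α : Fin (Nm + 1) → ℕ) (s t : Fin Nm → ℕ) :
    AentPP N Nm ρ μ α s t ∈ NatSR N := by
  unfold AentPP
  split_ifs
  · unfold DvalP
    apply Subsemiring.add_mem
    · apply Subsemiring.sum_mem
      intro r _
      split_ifs
      · exact X_mem_NatSR _
      · exact Subsemiring.zero_mem _
    · split_ifs
      · exact X_mem_NatSR _
      · exact Subsemiring.zero_mem _
  · exact Subsemiring.zero_mem _




open MvPolynomial

def nE (N : ℕ) : ℕ := ∑ a : Fin N, (a.val + 1)

def tot {N : ℕ} (s : BigIdx N) : ℕ := ∑ a, ∑ j, s a j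

noncomputable def box (N : ℕ) (c : ℕ) : Finset (BigIdx N) :=
  Fintype.piFinset fun a => Fintype.piFinset fun _ => Finset.range (c + 1)

lemma mem_box {N c : ℕ} {s : BigIdx N} : s ∈ box N c ↔ ∀ a j, s a j ≤ c := by
  simp [box, Fintype.mem_piFinset, Nat.lt_succ_iff]

lemma entry_le_tot {N : ℕ} (s : BigIdx N) (a : Fin N) (j : Fin (a.val + 1)) :
    s a j ≤ tot s :=
  le_trans
    (Finset.single_le_sum (f := fun j => s a j) (fun _ _ => Nat.zero_le _) (Finset.mem_univ j))
    (Finset.single_le_sum (f := fun a => ∑ j, s a j) (fun _ _ => Nat.zero_le _)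
      (Finset.mem_univ a))

lemma self_mem_box_tot {N : ℕ} (s : BigIdx N) : s ∈ box N (tot s) :=
  mem_box.mpr (entry_le_tot s)

lemma box_mono {N : ℕ} {c c' : ℕ} (h : c ≤ c') : box N c ⊆ box N c' := by
  intro s hs
  rw [mem_box] at hs ⊢
  exact fun a j => le_trans (hs a j) h

lemma tot_le_of_mem_box {N c : ℕ} {s : BigIdx N} (h : s ∈ box N c) : tot s ≤ nE N * c := by
  rw [mem_box] at h
  calc tot s ≤ ∑ a : Fin N, ∑ _j : Fin (a.val + 1), c :=
        Finset.sum_le_sum (fun a _ => Finset.sum_le_sum (fun j _ => h a j))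
  _ = nE N * c := by simp [nE, Finset.sum_mul]

noncomputable def XPterm (N : ℕ) (σi : Fin (N + 1) → ℕ) (μ : BigIdx N) (s t : BigIdx N) :
    Pm N :=
  ∏ a : Fin N,
    AentPP N (a.val + 1) (Fin.castLE (Nat.succ_le_succ a.isLt))
      (mextend N μ σi ⟨a.val, Nat.lt_succ_of_lt a.isLt⟩)
      (mextend N μ σi ⟨a.val + 1, Nat.succ_lt_succ a.isLt⟩)
      (s a) (t a)

noncomputable def muFS {N : ℕ} (s : BigIdx N) : Finset (BigIdx N) :=
  Fintype.piFinset fun a => Fintype.piFinset fun j => Finset.range (s a j + 1)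

lemma mem_muFS {N : ℕ} {s μ : BigIdx N} : μ ∈ muFS s ↔ ∀ a j, μ a j ≤ s a j := by
  simp [muFS, Fintype.mem_piFinset, Nat.lt_succ_iff]

noncomputable def XPent (N : ℕ) (σi : Fin (N + 1) → ℕ) (s t : BigIdx N) : Pm N :=
  ∑ μ ∈ muFS s, XPterm N σi μ s t

lemma mextend_fst {N : ℕ} (μ : BigIdx N) (σi : Fin (N + 1) → ℕ) (a : Fin N)
    (j : Fin (a.val + 1)) :
    mextend N μ σi ⟨a.val, Nat.lt_succ_of_lt a.isLt⟩ j = μ a j := by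
  show dite _ _ _ = _
  rw [dif_pos a.isLt]

lemma mextend_snd_lt {N : ℕ} (μ : BigIdx N) (σi : Fin (N + 1) → ℕ) (a : Fin N)
    (h : a.val + 1 < N) (j : Fin (a.val + 2)) :
    mextend N μ σi ⟨a.val + 1, Nat.succ_lt_succ a.isLt⟩ j = μ ⟨a.val + 1, h⟩ j := by
  show dite _ _ _ = _
  rw [dif_pos h]

lemma mextend_snd_eq {N : ℕ} (μ : BigIdx N) (σi : Fin (N + 1) → ℕ) (a : Fin N)
    (h : ¬ a.val + 1 < N) (j : Fin (a.val + 2)) :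
    mextend N μ σi ⟨a.val + 1, Nat.succ_lt_succ a.isLt⟩ j
      = σi (Fin.castLE (Nat.succ_le_of_lt (Nat.succ_lt_succ a.isLt)) j) := by
  show dite _ _ _ = _
  rw [dif_neg h]

lemma XPterm_eq_zero {N : ℕ} {σi : Fin (N + 1) → ℕ} {μ s : BigIdx N} (t : BigIdx N)
    (h : μ ∉ muFS s) : XPterm N σi μ s t = 0 := by
  rw [mem_muFS] at h
  push_neg at h
  obtain ⟨a, j, hj⟩ := h
  refine Finset.prod_eq_zero (Finset.mem_univ a) ?_
  unfold AentPP
  rw [if_neg]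
  rintro ⟨h1, -⟩
  have := h1 j
  rw [mextend_fst] at this
  omega

lemma Xterm_real_zero {N : ℕ} {w : Fin (N + 1) → ℝ} {σi : Fin (N + 1) → ℕ} {μ s : BigIdx N}
    (t : BigIdx N) (h : μ ∉ muFS s) :
    (∏ a : Fin N,
      Aent (a.val + 1) (fun b => w (Fin.castLE (Nat.succ_le_succ a.isLt) b))
        (mextend N μ σi ⟨a.val, Nat.lt_succ_of_lt a.isLt⟩)
        (mextend N μ σi ⟨a.val + 1, Nat.succ_lt_succ a.isLt⟩)
        (s a) (t a)) = 0 := by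
  rw [mem_muFS] at h
  push_neg at h
  obtain ⟨a, j, hj⟩ := h
  refine Finset.prod_eq_zero (Finset.mem_univ a) ?_
  unfold Aent AentGen
  rw [if_neg]
  rintro ⟨h1, -⟩
  have := h1 j
  rw [mextend_fst] at this
  omega

lemma eval_XPent {N : ℕ} (σi : Fin (N + 1) → ℕ) (s t : BigIdx N) (w : Fin (N + 1) → ℝ) :
    MvPolynomial.eval w (XPent N σi s t) = Xent N w σi s t := by
  unfold Xent
  rw [tsum_eq_sum (s := muFS s) (fun μ hμ => Xterm_real_zero t hμ)]
  unfold XPent XPterm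
  rw [map_sum]
  refine Finset.sum_congr rfl (fun μ _ => ?_)
  rw [map_prod]
  refine Finset.prod_congr rfl (fun a _ => ?_)
  rw [eval_AentPP]
  rfl

/-- Support bound for the rows of `XPent`. -/
lemma XPent_support {N : ℕ} {σi : Fin (N + 1) → ℕ} {Mtot : ℕ} (hσle : ∀ b, σi b ≤ Mtot)
    {s t : BigIdx N} (h : XPent N σi s t ≠ 0) : t ∈ box N (2 * tot s + Mtot) := by
  rw [mem_box]
  intro a j
  obtain ⟨μ, hμmem, hμ⟩ := Finset.exists_ne_zero_of_sum_ne_zero h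
  unfold XPterm at hμ
  rw [Finset.prod_ne_zero_iff] at hμ
  have ha := AentPP_cond (hμ a (Finset.mem_univ a))
  have ht := (ha.1.2 j)
  rw [mextend_fst] at ht
  have hμs : μ a j ≤ s a j := by
    have := ha.1.1 j
    rwa [mextend_fst] at this
  have hsle := entry_le_tot s a j
  by_cases hlt : a.val + 1 < N
  · have hb := AentPP_cond (hμ ⟨a.val + 1, hlt⟩ (Finset.mem_univ _))
    have h2 := hb.1.1 (Fin.castSucc j)
    rw [mextend_fst] at h2
    rw [mextend_snd_lt μ σi a hlt] at ht
    have := entry_le_tot s ⟨a.val + 1, hlt⟩ (Fin.castSucc j)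
    omega
  · rw [mextend_snd_eq μ σi a hlt] at ht
    have := hσle (Fin.castLE (Nat.succ_le_of_lt (Nat.succ_lt_succ a.isLt)) (Fin.castSucc j))
    omega

open Classical in
noncomputable def matProdP (N Mtot : ℕ) :
    (ℓ : ℕ) → (Fin ℓ → BigIdx N → BigIdx N → Pm N) → BigIdx N → BigIdx N → Pm N
  | 0, _ => fun s t => if s = t then 1 else 0
  | (ℓ + 1), F => fun s t =>
      ∑ u ∈ box N (2 * tot s + Mtot),
        F 0 s u * matProdP N Mtot ℓ (fun i => F i.succ) u t

lemma eval_matProdP (N Mtot : ℕ) (w : Fin (N + 1) → ℝ) :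
    ∀ (ℓ : ℕ) (F : Fin ℓ → BigIdx N → BigIdx N → Pm N) (f : Fin ℓ → BigIdx N → BigIdx N → ℝ),
      (∀ i s u, F i s u ≠ 0 → u ∈ box N (2 * tot s + Mtot)) →
      (∀ i s u, MvPolynomial.eval w (F i s u) = f i s u) →
      ∀ s t, MvPolynomial.eval w (matProdP N Mtot ℓ F s t) = matProd ℓ f s t := by
  intro ℓ
  induction ℓ with
  | zero =>
      intro F f _ _ s t
      simp only [matProdP, matProd]
      split_ifs
      · exact map_one _
      · exact map_zero _
  | succ ℓ ih =>
      intro F f hF hE s t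
      simp only [matProdP, matProd]
      unfold matMul
      rw [tsum_eq_sum (s := box N (2 * tot s + Mtot)) (fun u hu => ?_), map_sum]
      · refine Finset.sum_congr rfl (fun u _ => ?_)
        rw [map_mul, hE, ih (fun i => F i.succ) (fun i => f i.succ)
          (fun i s u => hF i.succ s u) (fun i s u => hE i.succ s u)]
      · have hz : F 0 s u = 0 := by
          by_contra hc
          exact hu (hF 0 s u hc)
        rw [← hE 0 s u, hz, map_zero, zero_mul]

def capIter (N Mtot c : ℕ) : ℕ → ℕ
  | 0 => c
  | (k + 1) => 2 * (nE N * capIter N Mtot c k) + Mtot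

lemma capIter_shift (N Mtot c : ℕ) (k : ℕ) :
    capIter N Mtot (capIter N Mtot c 1) k = capIter N Mtot c (k + 1) := by
  induction k with
  | zero => rfl
  | succ k ih => show 2 * (nE N * _) + Mtot = _; rw [ih]; rfl

lemma pexp (N Mtot : ℕ) :
    ∀ (ℓ : ℕ) (F : Fin ℓ → BigIdx N → BigIdx N → Pm N),
      (∀ i s u, F i s u ≠ 0 → u ∈ box N (2 * tot s + Mtot)) →
      ∀ (c : ℕ) (s : BigIdx N), s ∈ box N c → ∀ t,
        matProdP N Mtot ℓ F s t =
          ∑ p ∈ Fintype.piFinset (fun i : Fin ℓ => box N (capIter N Mtot c (i.val + 1))),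
            (∏ i : Fin ℓ, F i ((Fin.cons s p : Fin (ℓ + 1) → BigIdx N) i.castSucc)
                ((Fin.cons s p : Fin (ℓ + 1) → BigIdx N) i.succ)) *
              (if (Fin.cons s p : Fin (ℓ + 1) → BigIdx N) (Fin.last ℓ) = t then 1 else 0) := by
  intro ℓ
  induction ℓ with
  | zero =>
      intro F _ c s _ t
      have huniv : Fintype.piFinset (fun i : Fin 0 => box N (capIter N Mtot c (i.val + 1)))
          = (Finset.univ : Finset (Fin 0 → BigIdx N)) :=
        Finset.eq_univ_iff_forall.mpr (fun x => Fintype.mem_piFinset.mpr (fun i => i.elim0))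
      rw [huniv, Fintype.sum_unique]
      show (if s = t then 1 else 0) = _
      rw [Finset.univ_eq_empty, Finset.prod_empty, one_mul,
        show (Fin.last 0 : Fin 1) = 0 from rfl, Fin.cons_zero]
  | succ ℓ ih =>
      intro F hF c s hs t
      rw [show matProdP N Mtot (ℓ + 1) F s t
        = ∑ u ∈ box N (2 * tot s + Mtot), F 0 s u * matProdP N Mtot ℓ (fun i => F i.succ) u t
        from rfl]
      have hsub : box N (2 * tot s + Mtot) ⊆ box N (capIter N Mtot c 1) := by
        apply box_mono
        have := tot_le_of_mem_box hs
        show 2 * tot s + Mtot ≤ 2 * (nE N * c) + Mtot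
        omega
      have hext : (∑ u ∈ box N (2 * tot s + Mtot),
            F 0 s u * matProdP N Mtot ℓ (fun i => F i.succ) u t)
          = ∑ u ∈ box N (capIter N Mtot c 1),
            F 0 s u * matProdP N Mtot ℓ (fun i => F i.succ) u t := by
        refine Finset.sum_subset hsub (fun u _ hu => ?_)
        have hz : F 0 s u = 0 := by
          by_contra hc
          exact hu (hF 0 s u hc)
        rw [hz, zero_mul]
      rw [hext]
      have hrec : ∀ u ∈ box N (capIter N Mtot c 1),
          matProdP N Mtot ℓ (fun i => F i.succ) u t =
            ∑ p ∈ Fintype.piFinset (fun i : Fin ℓ => box N (capIter N Mtot c (i.val + 2))),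
              (∏ i : Fin ℓ, F i.succ ((Fin.cons u p : Fin (ℓ + 1) → BigIdx N) i.castSucc)
                  ((Fin.cons u p : Fin (ℓ + 1) → BigIdx N) i.succ)) *
                (if (Fin.cons u p : Fin (ℓ + 1) → BigIdx N) (Fin.last ℓ) = t then 1 else 0) := by
        intro u hu
        rw [ih (fun i => F i.succ) (fun i s u => hF i.succ s u) (capIter N Mtot c 1) u hu t]
        apply Finset.sum_congr
        · congr 1
          funext i
          rw [capIter_shift]
        · intros; rfl
      rw [Finset.sum_congr rfl (fun u hu => by rw [hrec u hu])]
      rw [Finset.sum_congr rfl (fun u _ => Finset.mul_sum _ _ _)]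
      rw [← Finset.sum_product']
      have hsummand : ∀ u p,
          F 0 s u *
              ((∏ i : Fin ℓ, F i.succ ((Fin.cons u p : Fin (ℓ + 1) → BigIdx N) i.castSucc)
                  ((Fin.cons u p : Fin (ℓ + 1) → BigIdx N) i.succ)) *
                (if (Fin.cons u p : Fin (ℓ + 1) → BigIdx N) (Fin.last ℓ) = t then 1 else 0))
            = (∏ i : Fin (ℓ + 1),
                F i ((Fin.cons s (Fin.cons u p) : Fin (ℓ + 2) → BigIdx N) i.castSucc)
                  ((Fin.cons s (Fin.cons u p) : Fin (ℓ + 2) → BigIdx N) i.succ)) *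
              (if (Fin.cons s (Fin.cons u p) : Fin (ℓ + 2) → BigIdx N) (Fin.last (ℓ + 1)) = t
                then 1 else 0) := by
        intro u p
        rw [Fin.prod_univ_succ]
        have e0 : (Fin.cons s (Fin.cons u p) : Fin (ℓ + 2) → BigIdx N) (Fin.castSucc 0) = s := by
          rw [Fin.castSucc_zero, Fin.cons_zero]
        have e1 : (Fin.cons s (Fin.cons u p) : Fin (ℓ + 2) → BigIdx N) (Fin.succ 0) = u := by
          rw [Fin.cons_succ, Fin.cons_zero]
        rw [e0, e1]
        have h1 : ∀ i : Fin ℓ, (Fin.cons s (Fin.cons u p) : Fin (ℓ + 2) → BigIdx N)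
            i.succ.castSucc = (Fin.cons u p : Fin (ℓ + 1) → BigIdx N) i.castSucc := by
          intro i
          rw [← Fin.succ_castSucc, Fin.cons_succ]
        have h2 : ∀ i : Fin ℓ, (Fin.cons s (Fin.cons u p) : Fin (ℓ + 2) → BigIdx N)
            i.succ.succ = (Fin.cons u p : Fin (ℓ + 1) → BigIdx N) i.succ := by
          intro i
          rw [Fin.cons_succ]
        have h3 : (Fin.cons s (Fin.cons u p) : Fin (ℓ + 2) → BigIdx N) (Fin.last (ℓ + 1))
            = (Fin.cons u p : Fin (ℓ + 1) → BigIdx N) (Fin.last ℓ) := by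
          rw [← Fin.succ_last, Fin.cons_succ]
        simp only [h1, h2, h3]
        ring
      refine Finset.sum_nbij' (fun up => Fin.cons up.1 up.2) (fun p => (p 0, Fin.tail p))
        ?_ ?_ ?_ ?_ ?_
      · rintro ⟨u, p⟩ hup
        rw [Finset.mem_product] at hup
        rw [Fintype.mem_piFinset]
        intro i
        induction i using Fin.cases with
        | zero => simpa using hup.1
        | succ i' => simpa using Fintype.mem_piFinset.mp hup.2 i'
      · intro p hp
        rw [Finset.mem_product]
        refine ⟨by simpa using Fintype.mem_piFinset.mp hp 0, ?_⟩
        rw [Fintype.mem_piFinset]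
        intro i'
        simpa [Fin.tail] using Fintype.mem_piFinset.mp hp i'.succ
      · rintro ⟨u, p⟩ _
        simp
      · intro p _
        exact Fin.cons_self_tail p
      · rintro ⟨u, p⟩ _
        exact hsummand u p




open MvPolynomial

noncomputable def nodeQ {N L : ℕ} (s : BigIdx N) (p : Fin L → BigIdx N) (i : Fin L) :
    BigIdx N :=
  (Fin.cons s p : Fin (L + 1) → BigIdx N) i.castSucc

lemma node_cyc {N L : ℕ} {s : BigIdx N} {p : Fin L → BigIdx N}
    (hend : (Fin.cons s p : Fin (L + 1) → BigIdx N) (Fin.last L) = s) (i : Fin L) :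
    (Fin.cons s p : Fin (L + 1) → BigIdx N) i.succ = nodeQ s p (cyc i) := by
  unfold nodeQ
  by_cases h : i.val + 1 = L
  · have h1 : i.succ = Fin.last L := by
      apply Fin.ext
      simpa using h
    have h2 : (cyc i).castSucc = (0 : Fin (L + 1)) := by
      apply Fin.ext
      simp [cyc_val, h]
    rw [h1, h2, hend, Fin.cons_zero]
  · congr 1
    apply Fin.ext
    have := i.isLt
    simp [cyc_val, h]

noncomputable def facA {N L : ℕ} (σ : Config L (N + 1)) (μt : Fin L → BigIdx N)
    (x y : Fin L → BigIdx N) (i : Fin L) (a : Fin N) : Pm N :=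
  AentPP N (a.val + 1) (Fin.castLE (Nat.succ_le_succ a.isLt))
    (mextend N (μt i) (σ i) ⟨a.val, Nat.lt_succ_of_lt a.isLt⟩)
    (mextend N (μt i) (σ i) ⟨a.val + 1, Nat.succ_lt_succ a.isLt⟩)
    (x i a) (y i a)

lemma XPterm_eq_prod_facA {N L : ℕ} (σ : Config L (N + 1)) (μt : Fin L → BigIdx N)
    (x y : Fin L → BigIdx N) (i : Fin L) :
    XPterm N (σ i) (μt i) (x i) (y i) = ∏ a : Fin N, facA σ μt x y i a := rfl

lemma term_core {N L : ℕ} {σ : Config L (N + 1)} {s : BigIdx N} {p : Fin L → BigIdx N}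
    {μt : Fin L → BigIdx N}
    (hend : (Fin.cons s p : Fin (L + 1) → BigIdx N) (Fin.last L) = s)
    (hfac : ∀ i a, facA σ μt (nodeQ s p)
      (fun i' => (Fin.cons s p : Fin (L + 1) → BigIdx N) i'.succ) i a ≠ 0) :
    (∀ i a (j : Fin (a.val + 1)), μt i a j ≤ nodeQ s p i a j)
    ∧ (∀ i a (j : Fin (a.val + 1)), nodeQ s p (cyc i) a j + μt i a j
        = nodeQ s p i a j + AoutF σ μt i a j.castSucc)
    ∧ (∀ i a, AoutF σ μt i a (Fin.last (a.val + 1)) ≠ 0 →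
        ∀ j, nodeQ s p i a j = μt i a j) := by
  have hcond := fun i a => AentPP_cond (hfac i a)
  have hC1 : ∀ i a (j : Fin (a.val + 1)), μt i a j ≤ nodeQ s p i a j := by
    intro i a j
    have := (hcond i a).1.1 j
    rwa [mextend_fst] at this
  refine ⟨hC1, ?_, ?_⟩
  · intro i a j
    have := (hcond i a).1.2 j
    simp only at this
    rw [mextend_fst, node_cyc hend i] at this
    have h1 := hC1 i a j
    show nodeQ s p (cyc i) a j + μt i a j
      = nodeQ s p i a j + mextend N (μt i) (σ i) ⟨a.val + 1, Nat.succ_lt_succ a.isLt⟩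
        j.castSucc
    omega
  · intro i a hA j
    have hD := (hcond i a).2
    have hu := DvalP_u_eq_zero (hA) hD j
    have h1 := hC1 i a j
    rw [mextend_fst] at hu
    omega




open MvPolynomial

section Assembly

variable {N L : ℕ} {mm : Fin (N + 1) → ℕ} {σ : Config L (N + 1)}

lemma XPfam_support (hσ : inSector σ mm) : ∀ (i : Fin L) (s u : BigIdx N),
    XPent N (σ i) s u ≠ 0 → u ∈ box N (2 * tot s + ∑ b, mm b) :=
  fun i _ u h => XPent_support (fun b => le_trans (sigma_le_mm hσ i b)
    (Finset.single_le_sum (f := mm) (fun _ _ => Nat.zero_le _) (Finset.mem_univ b))) h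

lemma diag_support (hL : 1 ≤ L) (hmm : ∀ b, 1 ≤ mm b) (hσ : inSector σ mm) {s : BigIdx N}
    (h : matProdP N (∑ b, mm b) L (fun i => XPent N (σ i)) s s ≠ 0) :
    s ∈ box N ((L + 1) * ∑ b, mm b) := by
  rw [pexp N (∑ b, mm b) L _ (XPfam_support hσ) (tot s) s (self_mem_box_tot s) s] at h
  obtain ⟨p, hpmem, hp⟩ := Finset.exists_ne_zero_of_sum_ne_zero h
  rcases mul_ne_zero_iff.mp hp with ⟨hprod, hind⟩
  have hend : (Fin.cons s p : Fin (L + 1) → BigIdx N) (Fin.last L) = s := by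
    by_contra hc
    rw [if_neg hc] at hind
    exact hind rfl
  rw [Finset.prod_ne_zero_iff] at hprod
  have hex : ∀ i : Fin L, ∃ μ, XPterm N (σ i) μ (nodeQ s p i)
      ((Fin.cons s p : Fin (L + 1) → BigIdx N) i.succ) ≠ 0 := by
    intro i
    obtain ⟨μ, _, hμ⟩ := Finset.exists_ne_zero_of_sum_ne_zero (hprod i (Finset.mem_univ i))
    exact ⟨μ, hμ⟩
  choose μt hμt using hex
  have hfac : ∀ i a, facA σ μt (nodeQ s p)
      (fun i' => (Fin.cons s p : Fin (L + 1) → BigIdx N) i'.succ) i a ≠ 0 := by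
    intro i a
    have h2 : (∏ a : Fin N, facA σ μt (nodeQ s p)
        (fun i' => (Fin.cons s p : Fin (L + 1) → BigIdx N) i'.succ) i a) ≠ 0 := hμt i
    rw [Finset.prod_ne_zero_iff] at h2
    exact h2 a (Finset.mem_univ a)
  obtain ⟨hC1, hC2, hC3⟩ := term_core hend hfac
  rw [mem_box]
  intro a j
  have h0 : nodeQ s p ⟨0, hL⟩ = s := by
    unfold nodeQ
    have hcs : (Fin.castSucc (⟨0, hL⟩ : Fin L)) = (0 : Fin (L + 1)) := rfl
    rw [hcs, Fin.cons_zero]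
  have hb := core_q_bound hσ hC2 hC1 hC3 hmm ⟨0, hL⟩ a j
  rw [h0] at hb
  exact hb

lemma T_div (hσ : inSector σ mm) (hmm : ∀ b, 1 ≤ mm b)
    (s : BigIdx N) (p : Fin L → BigIdx N) (μt : Fin L → BigIdx N) :
    ∃ Qt : Pm N,
      ((∏ i : Fin L, XPterm N (σ i) (μt i) (nodeQ s p i)
          ((Fin.cons s p : Fin (L + 1) → BigIdx N) i.succ)) *
        (if (Fin.cons s p : Fin (L + 1) → BigIdx N) (Fin.last L) = s then 1 else 0))
        = (∏ a : Fin N, (MvPolynomial.X a.succ : Pm N)) * Qt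
      ∧ Qt.IsHomogeneous (N * (L - 1)) ∧ Qt ∈ NatSR N := by
  by_cases hend : (Fin.cons s p : Fin (L + 1) → BigIdx N) (Fin.last L) = s
  case neg =>
    exact ⟨0, by rw [if_neg hend, mul_zero, mul_zero],
      MvPolynomial.isHomogeneous_zero _ _ _, Subsemiring.zero_mem _⟩
  by_cases hfac : ∀ i a, facA σ μt (nodeQ s p)
      (fun i' => (Fin.cons s p : Fin (L + 1) → BigIdx N) i'.succ) i a ≠ 0
  case neg =>
    push_neg at hfac
    obtain ⟨i, a, hia⟩ := hfac
    refine ⟨0, ?_, MvPolynomial.isHomogeneous_zero _ _ _, Subsemiring.zero_mem _⟩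
    rw [mul_zero]
    have hzero : XPterm N (σ i) (μt i) (nodeQ s p i)
        ((Fin.cons s p : Fin (L + 1) → BigIdx N) i.succ) = 0 := by
      rw [XPterm_eq_prod_facA σ μt (nodeQ s p)
        (fun i' => (Fin.cons s p : Fin (L + 1) → BigIdx N) i'.succ) i]
      exact Finset.prod_eq_zero (Finset.mem_univ a) hia
    rw [Finset.prod_eq_zero (Finset.mem_univ i) hzero, zero_mul]
  obtain ⟨hC1, hC2, hC3⟩ := term_core hend hfac
  choose ia hia using core_exists hσ hC2 hmm
  have hext : ∀ a : Fin N, facA σ μt (nodeQ s p)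
      (fun i' => (Fin.cons s p : Fin (L + 1) → BigIdx N) i'.succ) (ia a) a
        = MvPolynomial.X a.succ := by
    intro a
    unfold facA
    rw [AentPP_extract (α := mextend N (μt (ia a)) (σ (ia a))
      ⟨a.val + 1, Nat.succ_lt_succ a.isLt⟩) (hia a) (hfac (ia a) a)]
    exact congrArg MvPolynomial.X (Fin.ext rfl)
  refine ⟨∏ a : Fin N, ∏ i ∈ Finset.univ.erase (ia a),
      facA σ μt (nodeQ s p)
        (fun i' => (Fin.cons s p : Fin (L + 1) → BigIdx N) i'.succ) i a, ?_, ?_, ?_⟩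
  · rw [if_pos hend, mul_one]
    calc (∏ i : Fin L, XPterm N (σ i) (μt i) (nodeQ s p i)
          ((Fin.cons s p : Fin (L + 1) → BigIdx N) i.succ))
        = ∏ i : Fin L, ∏ a : Fin N, facA σ μt (nodeQ s p)
            (fun i' => (Fin.cons s p : Fin (L + 1) → BigIdx N) i'.succ) i a :=
          Finset.prod_congr rfl (fun i _ => XPterm_eq_prod_facA σ μt (nodeQ s p) _ i)
    _ = ∏ a : Fin N, ∏ i : Fin L, facA σ μt (nodeQ s p)
            (fun i' => (Fin.cons s p : Fin (L + 1) → BigIdx N) i'.succ) i a :=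
          Finset.prod_comm
    _ = ∏ a : Fin N, ((MvPolynomial.X a.succ : Pm N) *
          ∏ i ∈ Finset.univ.erase (ia a), facA σ μt (nodeQ s p)
            (fun i' => (Fin.cons s p : Fin (L + 1) → BigIdx N) i'.succ) i a) := by
          refine Finset.prod_congr rfl (fun a _ => ?_)
          rw [← Finset.mul_prod_erase Finset.univ _ (Finset.mem_univ (ia a)), hext a]
    _ = _ := Finset.prod_mul_distrib
  · have hdeg : N * (L - 1) = ∑ _a : Fin N, (L - 1) := by
      simp [Finset.sum_const, Finset.card_univ, mul_comm]
    rw [hdeg]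
    apply MvPolynomial.IsHomogeneous.prod
    intro a _
    have hdeg2 : (L - 1) = ∑ _i ∈ Finset.univ.erase (ia a), 1 := by
      rw [Finset.sum_const, smul_eq_mul, mul_one,
        Finset.card_erase_of_mem (Finset.mem_univ _), Finset.card_univ, Fintype.card_fin]
    rw [hdeg2]
    apply MvPolynomial.IsHomogeneous.prod
    intro i _
    exact AentPP_homog _ _ _ _ _
  · exact Subsemiring.prod_mem _ (fun a _ => Subsemiring.prod_mem _
      (fun i _ => AentPP_mem_NatSR _ _ _ _ _))

lemma nE_pos (hN : 1 ≤ N) : 1 ≤ nE N :=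
  Finset.single_le_sum (f := fun a : Fin N => a.val + 1)
    (fun _ _ => Nat.zero_le _) (Finset.mem_univ (⟨0, hN⟩ : Fin N))

lemma capIter_mono (hN : 1 ≤ N) (Mtot c : ℕ) : Monotone (capIter N Mtot c) := by
  apply monotone_nat_of_le_succ
  intro k
  show capIter N Mtot c k ≤ 2 * (nE N * capIter N Mtot c k) + Mtot
  have h1 : capIter N Mtot c k ≤ nE N * capIter N Mtot c k :=
    Nat.le_mul_of_pos_left _ (nE_pos hN)
  omega

lemma node_mem (hN : 1 ≤ N) (Mtot : ℕ) {s : BigIdx N} {p : Fin L → BigIdx N}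
    (hp : p ∈ Fintype.piFinset (fun i : Fin L => box N (capIter N Mtot (tot s) (i.val + 1))))
    (i : Fin L) : nodeQ s p i ∈ box N (capIter N Mtot (tot s) L) := by
  unfold nodeQ
  by_cases h0 : i.val = 0
  · have hcs : i.castSucc = (0 : Fin (L + 1)) := Fin.ext (by simpa using h0)
    rw [hcs, Fin.cons_zero]
    exact box_mono (capIter_mono hN Mtot (tot s) (Nat.zero_le L)) (self_mem_box_tot s)
  · have hj : i.val - 1 < L := by have := i.isLt; omega
    have hcs : i.castSucc = Fin.succ ⟨i.val - 1, hj⟩ := Fin.ext (by simp; omega)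
    rw [hcs, Fin.cons_succ]
    refine box_mono (capIter_mono hN Mtot (tot s) ?_) (Fintype.mem_piFinset.mp hp ⟨i.val - 1, hj⟩)
    show (i.val - 1) + 1 ≤ L
    have := i.isLt; omega

lemma muFS_subset_box {N : ℕ} {n : BigIdx N} {c : ℕ} (hn : n ∈ box N c) :
    muFS n ⊆ box N c := by
  intro μ hμ
  rw [mem_box] at hn ⊢
  rw [mem_muFS] at hμ
  exact fun a j => le_trans (hμ a j) (hn a j)

lemma XPent_ext {N : ℕ} (σi : Fin (N + 1) → ℕ) {s : BigIdx N} {B : Finset (BigIdx N)}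
    (hsub : muFS s ⊆ B) (t : BigIdx N) :
    XPent N σi s t = ∑ μ ∈ B, XPterm N σi μ s t :=
  Finset.sum_subset hsub (fun μ _ hμ => XPterm_eq_zero t hμ)

lemma matProdP_diag_eq (hN : 1 ≤ N) (hσ : inSector σ mm) (s : BigIdx N) :
    matProdP N (∑ b, mm b) L (fun i => XPent N (σ i)) s s
      = ∑ p ∈ Fintype.piFinset
          (fun i : Fin L => box N (capIter N (∑ b, mm b) (tot s) (i.val + 1))),
        ∑ μt ∈ Fintype.piFinset
          (fun _ : Fin L => box N (capIter N (∑ b, mm b) (tot s) L)),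
          (∏ i : Fin L, XPterm N (σ i) (μt i) (nodeQ s p i)
            ((Fin.cons s p : Fin (L + 1) → BigIdx N) i.succ)) *
            (if (Fin.cons s p : Fin (L + 1) → BigIdx N) (Fin.last L) = s then 1 else 0) := by
  rw [pexp N (∑ b, mm b) L _ (XPfam_support hσ) (tot s) s (self_mem_box_tot s) s]
  refine Finset.sum_congr rfl (fun p hp => ?_)
  have h1 : ∀ i : Fin L,
      XPent N (σ i) ((Fin.cons s p : Fin (L + 1) → BigIdx N) i.castSucc)
          ((Fin.cons s p : Fin (L + 1) → BigIdx N) i.succ)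
        = ∑ μ ∈ box N (capIter N (∑ b, mm b) (tot s) L),
            XPterm N (σ i) μ (nodeQ s p i)
              ((Fin.cons s p : Fin (L + 1) → BigIdx N) i.succ) :=
    fun i => XPent_ext (σ i) (muFS_subset_box (node_mem hN _ hp i)) _
  rw [Finset.prod_congr rfl (fun i _ => h1 i), Finset.prod_univ_sum, Finset.sum_mul]

end Assembly



end Aux

/-- Lemma 3.2.  For a configuration in a basic sector, the quantity
`(w_2⋯w_n)⁻¹ Tr(X_{σ_1}⋯X_{σ_L})` is finite (the trace sum is summable) and is a
homogeneous polynomial in `w_1,…,w_n` of total degree `(n-1)(L-1)` with coefficients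
in `ℤ_{≥0}`. -/
theorem trace_is_homogeneous_polynomial (N L : ℕ) (hN : 1 ≤ N) (hL : 1 ≤ L)
    (mm : Fin (N + 1) → ℕ) (hmm : ∀ a, 1 ≤ mm a)
    (σ : Config L (N + 1)) (hσ : inSector σ mm) :
    (∀ w : Fin (N + 1) → ℝ, (∀ a, 0 < w a) →
        Summable (fun s : BigIdx N => matProd L (fun i => Xent N w (σ i)) s s)) ∧
    ∃ Q : MvPolynomial (Fin (N + 1)) ℝ,
      Q.IsHomogeneous (N * (L - 1)) ∧
      (∀ d : (Fin (N + 1)) →₀ ℕ, ∃ c : ℕ, Q.coeff d = (c : ℝ)) ∧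
      ∀ w : Fin (N + 1) → ℝ, (∀ a, 0 < w a) →
        MvPolynomial.eval w Q
          = (∏ r : Fin N, w r.succ)⁻¹ *
            matTrace (matProd L (fun i => Xent N w (σ i))) := by
  classical
  have hdiag0 : ∀ w : Fin (N + 1) → ℝ, ∀ s ∉ box N ((L + 1) * ∑ b, mm b),
      matProd L (fun i => Xent N w (σ i)) s s = 0 := by
    intro w s hs
    have hz : matProdP N (∑ b, mm b) L (fun i => XPent N (σ i)) s s = 0 := by
      by_contra hc
      exact hs (diag_support hL hmm hσ hc)
    rw [← eval_matProdP N (∑ b, mm b) w L (fun i => XPent N (σ i))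
      (fun i => Xent N w (σ i)) (XPfam_support hσ)
      (fun i s t => eval_XPent (σ i) s t w) s s, hz, map_zero]
  constructor
  · intro w _
    exact summable_of_ne_finset_zero (s := box N ((L + 1) * ∑ b, mm b))
      (fun s hs => hdiag0 w s hs)
  · choose Qt hQt1 hQt2 hQt3 using
      fun (s : BigIdx N) (p μt : Fin L → BigIdx N) => T_div hσ hmm s p μt
    refine ⟨∑ s ∈ box N ((L + 1) * ∑ b, mm b),
        ∑ p ∈ Fintype.piFinset
          (fun i : Fin L => box N (capIter N (∑ b, mm b) (tot s) (i.val + 1))),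
        ∑ μt ∈ Fintype.piFinset
          (fun _ : Fin L => box N (capIter N (∑ b, mm b) (tot s) L)),
        Qt s p μt, ?_, ?_, ?_⟩
    · refine MvPolynomial.IsHomogeneous.sum _ _ _ (fun s _ => ?_)
      refine MvPolynomial.IsHomogeneous.sum _ _ _ (fun p _ => ?_)
      exact MvPolynomial.IsHomogeneous.sum _ _ _ (fun μt _ => hQt2 s p μt)
    · intro d
      refine coeff_of_mem_NatSR ?_ d
      refine Subsemiring.sum_mem _ (fun s _ => ?_)
      refine Subsemiring.sum_mem _ (fun p _ => ?_)
      exact Subsemiring.sum_mem _ (fun μt _ => hQt3 s p μt)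
    · intro w hw
      have hQT : (∑ s ∈ box N ((L + 1) * ∑ b, mm b),
            matProdP N (∑ b, mm b) L (fun i => XPent N (σ i)) s s)
          = (∏ a : Fin N, (MvPolynomial.X a.succ : Pm N)) *
              ∑ s ∈ box N ((L + 1) * ∑ b, mm b),
              ∑ p ∈ Fintype.piFinset
                (fun i : Fin L => box N (capIter N (∑ b, mm b) (tot s) (i.val + 1))),
              ∑ μt ∈ Fintype.piFinset
                (fun _ : Fin L => box N (capIter N (∑ b, mm b) (tot s) L)),
              Qt s p μt := by
        simp only [Finset.mul_sum]
        refine Finset.sum_congr rfl (fun s _ => ?_)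
        rw [matProdP_diag_eq hN hσ s]
        refine Finset.sum_congr rfl (fun p _ => ?_)
        exact Finset.sum_congr rfl (fun μt _ => hQt1 s p μt)
      have hTr : matTrace (matProd L (fun i => Xent N w (σ i)))
          = MvPolynomial.eval w (∑ s ∈ box N ((L + 1) * ∑ b, mm b),
              matProdP N (∑ b, mm b) L (fun i => XPent N (σ i)) s s) := by
        unfold matTrace
        rw [tsum_eq_sum (s := box N ((L + 1) * ∑ b, mm b)) (fun s hs => hdiag0 w s hs),
          map_sum]
        exact Finset.sum_congr rfl (fun s _ =>
          (eval_matProdP N (∑ b, mm b) w L (fun i => XPent N (σ i))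
            (fun i => Xent N w (σ i)) (XPfam_support hσ)
            (fun i s t => eval_XPent (σ i) s t w) s s).symm)
      rw [hTr, hQT, map_mul, map_prod]
      simp only [MvPolynomial.eval_X]
      have hne : (∏ r : Fin N, w r.succ) ≠ 0 :=
        Finset.prod_ne_zero_iff.mpr (fun r _ => ne_of_gt (hw r.succ))
      rw [inv_mul_cancel_left₀ hne]


end ITAZRP
end

section
/- For the 1-species TAZRP with rate w_1 on the periodic chain ℤ_L, the uniform distribution on every sector is stationary: for every configuration (μ_1,…,μ_L) ∈ (ℤ_{≥0})^L one has Σ_{i∈ℤ_L} Σ_{μ'_i,μ'_{i+1}∈ℤ_{≥0}} h^{μ_i,μ_{i+1}}_{μ'_i,μ'_{i+1}} = 0, where h is the 1-species local Markov matrix. -/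
open scoped BigOperators

namespace ITAZRP

lemma h1_key (γ δ p1 p2 : ℕ) :
    (∃ k, 1 ≤ k ∧ k ≤ p2 ∧ γ = p1 + p2 - k + 1 ∧ δ = k - 1) ↔
      (p1 + p2 = γ + δ ∧ δ < p2) := by
  constructor
  · rintro ⟨k, h1, h2, h3, h4⟩; omega
  · rintro ⟨h1, h2⟩; exact ⟨δ + 1, by omega, by omega, by omega, by omega⟩

lemma h1_tsum (w1 : ℝ) (γ δ : ℕ) :
    ∑' p : ℕ × ℕ, h1 w1 p.1 p.2 γ δ = w1 * γ - w1 * δ := by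
  classical
  set T : Finset (ℕ × ℕ) :=
    insert (γ, δ) ((Finset.range γ).image fun j => (j, γ + δ - j)) with hT
  have hzero : ∀ p : ℕ × ℕ, p ∉ T → h1 w1 p.1 p.2 γ δ = 0 := by
    intro p hp
    simp only [hT, Finset.mem_insert, Finset.mem_image, Finset.mem_range, not_or,
      not_exists] at hp
    unfold h1
    rw [if_neg, if_neg]
    · rintro ⟨h1, h2⟩
      exact hp.1 (Prod.ext_iff.mpr ⟨h1, h2⟩)
    · rw [h1_key]
      rintro ⟨h1, h2⟩
      exact hp.2 p.1 ⟨by omega, Prod.ext_iff.mpr ⟨rfl, by omega⟩⟩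
  rw [tsum_eq_sum hzero]
  have hnm : (γ, δ) ∉ (Finset.range γ).image fun j => (j, γ + δ - j) := by
    simp only [Finset.mem_image, Finset.mem_range, not_exists]
    rintro j ⟨hj, h⟩
    obtain ⟨h1, h2⟩ := Prod.ext_iff.mp h
    omega
  rw [hT, Finset.sum_insert hnm, Finset.sum_image (by
    intro a _ b _ h; exact (Prod.ext_iff.mp h).1)]
  have hdiag : h1 w1 γ δ γ δ = -(w1 * δ) := by
    unfold h1
    rw [if_neg, if_pos ⟨rfl, rfl⟩]
    rw [h1_key]; omega
  have hterm : ∀ j ∈ Finset.range γ, h1 w1 j (γ + δ - j) γ δ = w1 := by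
    intro j hj
    rw [Finset.mem_range] at hj
    unfold h1
    rw [if_pos]
    rw [h1_key]; omega
  rw [hdiag, Finset.sum_congr rfl hterm, Finset.sum_const, Finset.card_range]
  push_cast; ring

lemma cyc_inj {L : ℕ} : Function.Injective (cyc (L := L)) := by
  intro i j h
  have h1 : i.val < L := i.isLt
  have h2 : j.val < L := j.isLt
  have hv : (i.val + 1) % L = (j.val + 1) % L := congrArg Fin.val h
  apply Fin.ext
  rcases Nat.lt_or_ge (i.val + 1) L with hi | hi
  · rw [Nat.mod_eq_of_lt hi] at hv
    rcases Nat.lt_or_ge (j.val + 1) L with hj | hj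
    · rw [Nat.mod_eq_of_lt hj] at hv; omega
    · have : j.val + 1 = L := by omega
      rw [this, Nat.mod_self] at hv; omega
  · have : i.val + 1 = L := by omega
    rw [this, Nat.mod_self] at hv
    rcases Nat.lt_or_ge (j.val + 1) L with hj | hj
    · rw [Nat.mod_eq_of_lt hj] at hv; omega
    · omega

/-- For the single species TAZRP with rate `w_1` on the periodic chain
`ℤ_L`, the uniform distribution on every sector is stationary:
`Σ_{i∈ℤ_L} Σ_{μ'_i,μ'_{i+1}} h^{μ_i,μ_{i+1}}_{μ'_i,μ'_{i+1}} = 0`. -/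
theorem one_species_uniform_stationary (L : ℕ) (hL : 1 ≤ L) (w1 : ℝ) (hw : 0 < w1)
    (μ : Fin L → ℕ) :
    (∑ i : Fin L, ∑' p : ℕ × ℕ, h1 w1 p.1 p.2 (μ i) (μ (cyc i))) = 0 := by
  have hsum : ∑ i : Fin L, (μ (cyc i) : ℝ) = ∑ i : Fin L, (μ i : ℝ) :=
    Fintype.sum_bijective cyc
      ((Finite.injective_iff_bijective).mp cyc_inj) _ _ (fun i => rfl)
  calc ∑ i : Fin L, ∑' p : ℕ × ℕ, h1 w1 p.1 p.2 (μ i) (μ (cyc i))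
      = ∑ i : Fin L, (w1 * (μ i : ℝ) - w1 * (μ (cyc i) : ℝ)) := by
        exact Finset.sum_congr rfl fun i _ => h1_tsum w1 (μ i) (μ (cyc i))
    _ = 0 := by rw [Finset.sum_sub_distrib, ← Finset.mul_sum, ← Finset.mul_sum, hsum, sub_self]

end ITAZRP
end

section
/- For any pair of n-species local states (α, β), the total outgoing transition rate equals g(β): Σ_{(γ,δ) : (α,β)>(γ,δ)} w_{min(γ∖α)} = w_1 β^1 + ⋯ + w_n β^n = g(β). Consequently, every column of the local Markov matrix h sums to zero: Σ_{γ,δ} h^{γ,δ}_{α,β} = 0. -/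
open scoped BigOperators

namespace ITAZRP

/-! Sort `β` into the word `β_1 ≤ ⋯ ≤ β_r`. The pairs `(γ, δ)` with `(α, β) > (γ, δ)` are exactly
the `r` cuts `(α ∪ {β_{k+1}, …, β_r}, (β_1, …, β_k))`, `0 ≤ k < r`, which are pairwise distinct
since `δ` has `k` letters. The cut at `k` has rate `w_{β_{k+1}}`, so the rates add up to
`w_{β_1} + ⋯ + w_{β_r} = g(β)`, which the diagonal entry `-g(β)` cancels. -/

def toMulEquiv {m : ℕ} : (Fin m → ℕ) ≃ Multiset (Fin m) where
  toFun := toMul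
  invFun := ofMul
  left_inv α := by
    funext a
    simp [ofMul, toMul, Multiset.count_sum', Multiset.count_replicate]
  right_inv s := by
    ext a
    simp [ofMul, toMul, Multiset.count_sum', Multiset.count_replicate]

theorem gVal_toMul {m : ℕ} (w : Fin m → ℝ) (β : Fin m → ℕ) :
    gVal w (toMul β) = ∑ a, w a * (β a : ℝ) :=
  (map_sum (Multiset.sumAddMonoidHom.comp (Multiset.mapAddMonoidHom w)) _ _).trans
    (by simp [mul_comm])

theorem sort_add_of_forall_le {α : Type*} [LinearOrder α] {s t : Multiset α}
    (h : ∀ x ∈ s, ∀ y ∈ t, x ≤ y) :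
    (s + t).sort (· ≤ ·) = s.sort (· ≤ ·) ++ t.sort (· ≤ ·) := by
  have hst : s + t = ↑(s.sort (· ≤ ·) ++ t.sort (· ≤ ·)) := by
    rw [← Multiset.coe_add, Multiset.sort_eq, Multiset.sort_eq]
  rw [hst, Multiset.coe_sort]
  refine List.mergeSort_eq_self _ ?_
  refine List.pairwise_append.mpr ⟨?_, ?_, fun x hx y hy => ?_⟩
  · exact Multiset.pairwise_sort s (· ≤ ·)
  · exact Multiset.pairwise_sort t (· ≤ ·)
  · simpa using h x ((Multiset.mem_sort _).mp hx) y ((Multiset.mem_sort _).mp hy)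

theorem msetMin_eq_of_forall_le {m : ℕ} {s : Multiset (Fin m)} (hs : s.toFinset.Nonempty)
    {a : Fin m} (ha : a ∈ s) (hle : ∀ b ∈ s, a ≤ b) : msetMin s hs = a :=
  le_antisymm (Finset.min'_le _ _ (Multiset.mem_toFinset.mpr ha))
    (Finset.le_min' _ _ _ fun b hb => hle b (Multiset.mem_toFinset.mp hb))

/-- The pair `(γ, δ) = (α ∪ {β_{k+1}, …, β_r}, (β_1, …, β_k))` obtained by cutting the sorted
word of `β` after its first `k` letters (so `k` is the paper's `k - 1`). -/
def cutAt {m : ℕ} (A B : Multiset (Fin m)) (k : ℕ) : Multiset (Fin m) × Multiset (Fin m) :=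
  (A + ↑((B.sort (· ≤ ·)).drop k), ↑((B.sort (· ≤ ·)).take k))

theorem gtRel_iff_exists_cutAt {m : ℕ} {A B γ δ : Multiset (Fin m)} :
    GtRel A B γ δ ↔ ∃ k : Fin (B.sort (· ≤ ·)).length, cutAt A B k = (γ, δ) := by
  constructor
  · rintro ⟨t, ht, rfl, rfl, hle⟩
    have hsort := sort_add_of_forall_le hle
    refine ⟨⟨(δ.sort (· ≤ ·)).length, by simp [hsort, Multiset.card_pos.mpr ht]⟩, ?_⟩
    simp [cutAt, hsort]
  · rintro ⟨⟨k, hk⟩, hcut⟩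
    simp only [cutAt, Prod.mk.injEq] at hcut
    obtain ⟨rfl, rfl⟩ := hcut
    have hpw := Multiset.pairwise_sort B (· ≤ ·)
    rw [← List.take_append_drop k (B.sort (· ≤ ·))] at hpw
    refine ⟨↑((B.sort (· ≤ ·)).drop k), by simpa using hk, ?_, rfl, ?_⟩
    · rw [Multiset.coe_add, List.take_append_drop, Multiset.sort_eq]
    · simpa using (List.pairwise_append.mp hpw).2.2

theorem cutAt_injective {m : ℕ} (A B : Multiset (Fin m)) :
    Function.Injective fun k : Fin (B.sort (· ≤ ·)).length => cutAt A B k := by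
  intro k l hkl
  have hcard := congrArg (fun p => Multiset.card p.2) hkl
  simp only [cutAt, Multiset.coe_card, List.length_take] at hcard
  omega

theorem wRateM_cutAt {m : ℕ} (w : Fin m → ℝ) (A B : Multiset (Fin m))
    (k : Fin (B.sort (· ≤ ·)).length) :
    wRateM w A B (cutAt A B k).1 (cutAt A B k).2 = w (B.sort (· ≤ ·))[k] := by
  have hGt : GtRel A B (cutAt A B k).1 (cutAt A B k).2 := gtRel_iff_exists_cutAt.mpr ⟨k, rfl⟩
  rw [wRateM, dif_pos hGt]
  -- the cut-off tail is sorted and starts with the `k`-th letter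
  have htail := Multiset.pairwise_sort B (· ≤ ·) |>.sublist (List.drop_sublist k _)
  rw [List.drop_eq_getElem_cons k.isLt] at htail
  congr 1
  refine msetMin_eq_of_forall_le _ ?_ fun b hb => ?_
  · rw [cutAt, add_tsub_cancel_left, List.drop_eq_getElem_cons k.isLt]
    exact Multiset.mem_coe.mpr List.mem_cons_self
  · rw [cutAt, add_tsub_cancel_left, List.drop_eq_getElem_cons k.isLt, Multiset.mem_coe,
      List.mem_cons] at hb
    rcases hb with rfl | hb
    · exact le_rfl
    · exact List.rel_of_pairwise_cons htail hb

theorem support_wRateM_subset {m : ℕ} (w : Fin m → ℝ) (A B : Multiset (Fin m)) :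
    Function.support (fun q : Multiset (Fin m) × Multiset (Fin m) => wRateM w A B q.1 q.2) ⊆
      Set.range fun k : Fin (B.sort (· ≤ ·)).length => cutAt A B k := by
  intro q hq
  have hGt : GtRel A B q.1 q.2 := by
    by_contra hGt
    exact hq (dif_neg hGt)
  exact gtRel_iff_exists_cutAt.mp hGt

theorem tsum_wRateM {m : ℕ} (w : Fin m → ℝ) (A B : Multiset (Fin m)) :
    ∑' q : Multiset (Fin m) × Multiset (Fin m), wRateM w A B q.1 q.2 = gVal w B := by
  rw [← (cutAt_injective A B).tsum_eq (support_wRateM_subset w A B), tsum_fintype]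
  conv_rhs => rw [gVal, ← Multiset.sort_eq B (· ≤ ·), Multiset.map_coe, Multiset.sum_coe]
  simp only [wRateM_cutAt]
  exact Fin.sum_univ_fun_getElem _ w

theorem summable_wRateM {m : ℕ} (w : Fin m → ℝ) (A B : Multiset (Fin m)) :
    Summable fun q : Multiset (Fin m) × Multiset (Fin m) => wRateM w A B q.1 q.2 :=
  summable_of_hasFiniteSupport ((Set.finite_range _).subset (support_wRateM_subset w A B))

theorem GtRel.fst_ne {m : ℕ} {A B γ δ : Multiset (Fin m)} (h : GtRel A B γ δ) : γ ≠ A := by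
  obtain ⟨t, ht, -, rfl, -⟩ := h
  simpa using ht

theorem hEntM_eq_wRateM_add {m : ℕ} (w : Fin m → ℝ) (A B γ δ : Multiset (Fin m)) :
    hEntM w A B γ δ = wRateM w A B γ δ + if (γ, δ) = (A, B) then -gVal w B else 0 := by
  rw [hEntM, wRateM]
  by_cases hGt : GtRel A B γ δ
  · have hne : (γ, δ) ≠ (A, B) := fun h => hGt.fst_ne (Prod.ext_iff.mp h).1
    rw [dif_pos hGt, dif_pos hGt, if_neg hne, add_zero]
  · rw [dif_neg hGt, dif_neg hGt, zero_add]
    exact if_congr ((and_congr eq_comm eq_comm).trans Prod.mk_inj.symm) rfl rfl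

theorem tsum_hEntM {m : ℕ} (w : Fin m → ℝ) (A B : Multiset (Fin m)) :
    ∑' q : Multiset (Fin m) × Multiset (Fin m), hEntM w A B q.1 q.2 = 0 := by
  have hdiag := hasSum_ite_eq (A, B) (-gVal w B)
  calc ∑' q : Multiset (Fin m) × Multiset (Fin m), hEntM w A B q.1 q.2
      = ∑' q : Multiset (Fin m) × Multiset (Fin m),
          (wRateM w A B q.1 q.2 + if q = (A, B) then -gVal w B else 0) :=
        tsum_congr fun q => hEntM_eq_wRateM_add w A B q.1 q.2
    _ = gVal w B + -gVal w B := by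
        rw [(summable_wRateM w A B).tsum_add hdiag.summable, tsum_wRateM, hdiag.tsum_eq]
    _ = 0 := add_neg_cancel _

theorem total_outgoing_rate_general (n : ℕ) (w : Fin n → ℝ)
    (α β : Fin n → ℕ) :
    (∑' p : (Fin n → ℕ) × (Fin n → ℕ),
        wRateM w (toMul α) (toMul β) (toMul p.1) (toMul p.2)) = gVal w (toMul β) ∧
    gVal w (toMul β) = (∑ a : Fin n, w a * (β a : ℝ)) ∧
    (∑' p : (Fin n → ℕ) × (Fin n → ℕ), hEnt w α β p.1 p.2) = 0 := by
  let e : (Fin n → ℕ) × (Fin n → ℕ) ≃ _ := toMulEquiv.prodCongr toMulEquiv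
  exact ⟨(e.tsum_eq fun q => wRateM w (toMul α) (toMul β) q.1 q.2).trans (tsum_wRateM ..),
    gVal_toMul w β,
    (e.tsum_eq fun q => hEntM w (toMul α) (toMul β) q.1 q.2).trans (tsum_hEntM ..)⟩

/-- For any pair of `n`-species local states `(α, β)`, the total outgoing
rate is `Σ_{(γ,δ) : (α,β)>(γ,δ)} w_{min(γ∖α)} = g(β) = w_1 β^1 + ⋯ + w_n β^n`; consequently
every column of the local Markov matrix sums to zero: `Σ_{γ,δ} h^{γ,δ}_{α,β} = 0`. -/
theorem total_outgoing_rate (n : ℕ) (w : Fin n → ℝ) (hw : ∀ a, 0 < w a)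
    (α β : Fin n → ℕ) :
    (∑' p : (Fin n → ℕ) × (Fin n → ℕ),
        wRateM w (toMul α) (toMul β) (toMul p.1) (toMul p.2)) = gVal w (toMul β) ∧
    gVal w (toMul β) = (∑ a : Fin n, w a * (β a : ℝ)) ∧
    (∑' p : (Fin n → ℕ) × (Fin n → ℕ), hEnt w α β p.1 p.2) = 0 :=
  total_outgoing_rate_general n w α β

end ITAZRP
end

section
/- Trace selection rule: let n ≥ 2 and L ≥ 1, and let μ_1,…,μ_L ∈ (ℤ_{≥0})^{n−1} and σ_1,…,σ_L ∈ (ℤ_{≥0})^n. If Σ_{i=1}^L μ_i^b ≠ Σ_{i=1}^L σ_i^b for some b ∈ [1,n−1], then Tr_{F^{⊗(n−1)}}(A^{(n)}_{μ_1,σ_1} A^{(n)}_{μ_2,σ_2} ⋯ A^{(n)}_{μ_L,σ_L}) = 0. -/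
open scoped BigOperators

namespace ITAZRP

lemma prod_vanish (N : ℕ) (w : Fin (N + 1) → ℝ) (L : ℕ) :
    ∀ (μ : Fin L → (Fin N → ℕ)) (σ : Fin L → (Fin (N + 1) → ℕ)) (b : Fin N)
      (s t : Fin N → ℕ),
      ((t b : ℤ) ≠ (s b : ℤ) + ∑ i, ((σ i b.castSucc : ℤ) - (μ i b : ℤ))) →
      matProd L (fun i => Aent N w (μ i) (σ i)) s t = 0 := by
  induction L with
  | zero =>
    intro μ σ b s t h
    simp only [matProd]
    rw [if_neg]
    intro hst
    apply h
    subst hst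
    simp
  | succ L ih =>
    intro μ σ b s t h
    simp only [matProd, matMul]
    have key : ∀ u : Fin N → ℕ,
        Aent N w (μ 0) (σ 0) s u *
          matProd L (fun i => Aent N w (μ i.succ) (σ i.succ)) u t = 0 := by
      intro u
      by_cases hc : (∀ j, μ 0 j ≤ s j) ∧
          (∀ j, u j = s j - μ 0 j + (σ 0) j.castSucc)
      · have h1 := hc.1 b
        have h2 := hc.2 b
        have hub : (u b : ℤ) = (s b : ℤ) - μ 0 b + (σ 0) b.castSucc := by omega
        have hrest := ih (fun i => μ i.succ) (fun i => σ i.succ) b u t ?_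
        · rw [hrest, mul_zero]
        · rw [hub]
          intro heq
          apply h
          rw [Fin.sum_univ_succ]
          linarith
      · have hA : Aent N w (μ 0) (σ 0) s u = 0 := by
          simp only [Aent, AentGen]
          rw [if_neg hc]
        rw [hA, zero_mul]
    calc (∑' u, Aent N w (μ 0) (σ 0) s u *
          matProd L (fun i => Aent N w (μ i.succ) (σ i.succ)) u t)
        = ∑' _ : Fin N → ℕ, (0 : ℝ) := tsum_congr key
      _ = 0 := tsum_zero

/-- trace selection rule.  If the total creation and annihilation numbers
do not balance in some tensor slot `b ∈ [1, n-1]`, i.e. `Σ_i μ_i^b ≠ Σ_i σ_i^b`, then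
`Tr_{F^{⊗(n-1)}}(A^{(n)}_{μ_1,σ_1} ⋯ A^{(n)}_{μ_L,σ_L}) = 0`. -/
theorem trace_selection_rule (N L : ℕ) (hN : 1 ≤ N) (hL : 1 ≤ L)
    (w : Fin (N + 1) → ℝ) (hw : ∀ a, 0 < w a)
    (μ : Fin L → (Fin N → ℕ)) (σ : Fin L → (Fin (N + 1) → ℕ))
    (b : Fin N) (hb : (∑ i, μ i b) ≠ ∑ i, σ i b.castSucc) :
    matTrace (matProd L (fun i => Aent N w (μ i) (σ i))) = 0 := by
  have hsum : (∑ i, ((σ i b.castSucc : ℤ) - (μ i b : ℤ))) ≠ 0 := by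
    rw [Finset.sum_sub_distrib]
    intro heq
    apply hb
    have : ((∑ i, μ i b : ℕ) : ℤ) = ((∑ i, σ i b.castSucc : ℕ) : ℤ) := by
      push_cast
      linarith
    exact_mod_cast this
  have key : ∀ s : Fin N → ℕ,
      matProd L (fun i => Aent N w (μ i) (σ i)) s s = 0 := by
    intro s
    apply prod_vanish
    intro heq
    apply hsum
    linarith
  calc matTrace (matProd L (fun i => Aent N w (μ i) (σ i)))
      = ∑' _ : Fin N → ℕ, (0 : ℝ) := tsum_congr key
    _ = 0 := tsum_zero

end ITAZRP
end

section
/- Divisibility of the trace: let n ≥ 2 and L ≥ 1, let μ_1,…,μ_L ∈ (ℤ_{≥0})^{n−1} and σ_1,…,σ_L ∈ (ℤ_{≥0})^n, and suppose Σ_{i=1}^L σ_i^n ≥ 1 (at least one species-n particle is present). Then Tr_{F^{⊗(n−1)}}(A^{(n)}_{μ_1,σ_1}⋯A^{(n)}_{μ_L,σ_L}) is finite and, as a polynomial in w_1,…,w_n with nonnegative integer coefficients, is divisible by w_n. -/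
open scoped BigOperators

namespace ITAZRP

/-!
Each `A^{(n)}_{μ,α}` has one nonzero entry per row: row `s` (with `μ ≤ s`) is sent to
`s - μ + ᾱ` with a weight that is a sum of rates `w_r`. So the diagonal entry of the product
at `s` is the product of the weights along the orbit of `s`, and vanishes unless the orbit
closes up. If `α^n ≥ 1` then only `K_n` survives: the weight is `w_n` at the single row
`s = μ` and zero elsewhere. Since every step is invertible on the rows where its weight is
nonzero, at most one `s` contributes to the trace, and its contribution is `w_n` times a
product of polynomials with coefficients in `ℕ`.
-/

section FunctionalMatrix

variable {ι : Type*}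

open Classical in
noncomputable def funMat (v : ι → ℝ) (T : ι → ι) : ι → ι → ℝ :=
  fun s t => if t = T s then v s else 0

def orbitEnd : (L : ℕ) → (Fin L → ι → ι) → ι → ι
  | 0, _, s => s
  | L + 1, T, s => orbitEnd L (fun i => T i.succ) (T 0 s)

def orbitProd {R : Type*} [Monoid R] : (L : ℕ) → (Fin L → ι → R) → (Fin L → ι → ι) → ι → R
  | 0, _, _, _ => 1
  | L + 1, v, T, s => v 0 s * orbitProd L (fun i => v i.succ) (fun i => T i.succ) (T 0 s)

/-- `backOrbit L B k c = B 0 (B 1 (⋯ (B (k - 1) c)))`: when each `B i` inverts `T i`, the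
point whose orbit under the `T i` is at `c` after `k` steps. -/
def backOrbit : (L : ℕ) → (Fin L → ι → ι) → ℕ → ι → ι
  | 0, _, _, c => c
  | _ + 1, _, 0, c => c
  | L + 1, B, k + 1, c => B 0 (backOrbit L (fun i => B i.succ) k c)

theorem matMul_funMat (v : ι → ℝ) (T : ι → ι) (Y : ι → ι → ℝ) (s t : ι) :
    matMul (funMat v T) Y s t = v s * Y (T s) t := by
  unfold matMul funMat
  rw [tsum_eq_single (T s)] <;> simp_all

open Classical in
theorem matProd_funMat (L : ℕ) (v : Fin L → ι → ℝ) (T : Fin L → ι → ι) (s t : ι) :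
    matProd L (fun i => funMat (v i) (T i)) s t =
      if t = orbitEnd L T s then orbitProd L v T s else 0 := by
  induction L generalizing s t with
  | zero => simp [matProd, orbitEnd, orbitProd, eq_comm]
  | succ L ih =>
    rw [matProd, matMul_funMat, ih]
    simp only [orbitEnd, orbitProd, mul_ite, mul_zero]
    congr

theorem map_orbitProd {R S F : Type*} [Monoid R] [Monoid S] [FunLike F R S]
    [MonoidHomClass F R S] (φ : F) (L : ℕ) (v : Fin L → ι → R) (T : Fin L → ι → ι) (s : ι) :
    φ (orbitProd L v T s) = orbitProd L (fun i x => φ (v i x)) T s := by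
  induction L generalizing s with
  | zero => simp [orbitProd]
  | succ L ih => simp [orbitProd, ih]

theorem orbitProd_eq_mul {R : Type*} [CommMonoid R] {L : ℕ} {v v' : Fin L → ι → R}
    (T : Fin L → ι → ι) {i₀ : Fin L} {c : R} (hi₀ : ∀ x, v i₀ x = c * v' i₀ x)
    (h : ∀ i ≠ i₀, v i = v' i) (s : ι) :
    orbitProd L v T s = c * orbitProd L v' T s := by
  induction L generalizing s with
  | zero => exact i₀.elim0
  | succ L ih =>
    cases i₀ using Fin.cases with
    | zero =>
      have htail : (fun i : Fin L => v i.succ) = fun i => v' i.succ :=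
        funext fun i => h _ i.succ_ne_zero
      rw [orbitProd, orbitProd, hi₀, htail, mul_assoc]
    | succ j =>
      rw [orbitProd, orbitProd, h 0 (Fin.succ_ne_zero j).symm,
        ih (fun i => T i.succ) hi₀ (fun i hi => h i.succ (Fin.succ_injective _ |>.ne hi)),
        mul_left_comm]

theorem eq_backOrbit_of_orbitProd_ne_zero {R : Type*} [MonoidWithZero R] {L : ℕ}
    {v : Fin L → ι → R} {T B : Fin L → ι → ι} {i₀ : Fin L} {c : ι}
    (hB : ∀ i x, v i x ≠ 0 → B i (T i x) = x) (hc : ∀ x, v i₀ x ≠ 0 → x = c) {s : ι}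
    (hs : orbitProd L v T s ≠ 0) : s = backOrbit L B i₀ c := by
  induction L generalizing s with
  | zero => exact i₀.elim0
  | succ L ih =>
    rw [orbitProd] at hs
    have hs₀ := left_ne_zero_of_mul hs
    cases i₀ using Fin.cases with
    | zero => exact hc s hs₀
    | succ j =>
      rw [Fin.val_succ, backOrbit, ← ih (fun i => hB i.succ) hc (right_ne_zero_of_mul hs),
        hB 0 s hs₀]

end FunctionalMatrix

section OperatorA

variable {N : ℕ}

def aShift (μ : Fin N → ℕ) (α : Fin (N + 1) → ℕ) (s : Fin N → ℕ) : Fin N → ℕ :=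
  s - μ + α ∘ Fin.castSucc

def aUnshift (μ : Fin N → ℕ) (α : Fin (N + 1) → ℕ) (t : Fin N → ℕ) : Fin N → ℕ :=
  t - α ∘ Fin.castSucc + μ

open Classical in
noncomputable def aRow (w : Fin (N + 1) → ℝ) (μ : Fin N → ℕ) (α : Fin (N + 1) → ℕ)
    (s : Fin N → ℕ) : ℝ :=
  if μ ≤ s then Dval N w α (s - μ) else 0

noncomputable def dvalPoly (α : Fin (N + 1) → ℕ) (u : Fin N → ℕ) :
    MvPolynomial (Fin (N + 1)) ℕ :=
  (∑ r : Fin N,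
      if (∀ b : Fin (N + 1), (r : ℕ) < (b : ℕ) → α b = 0) ∧
          (∀ j : Fin N, j < r → u j = 0) ∧ u r ≠ 0
      then MvPolynomial.X r.castSucc else 0)
    + (if ∀ j, u j = 0 then MvPolynomial.X (Fin.last N) else 0)

open Classical in
noncomputable def aRowPoly (μ : Fin N → ℕ) (α : Fin (N + 1) → ℕ) (s : Fin N → ℕ) :
    MvPolynomial (Fin (N + 1)) ℕ :=
  if μ ≤ s then dvalPoly α (s - μ) else 0

theorem Aent_eq_funMat (w : Fin (N + 1) → ℝ) (μ : Fin N → ℕ) (α : Fin (N + 1) → ℕ) :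
    Aent N w μ α = funMat (aRow w μ α) (aShift μ α) := by
  funext s t
  simp only [Aent, AentGen, funMat, aRow, aShift, Pi.le_def, funext_iff]
  by_cases hst : ∀ j, t j = s j - μ j + α j.castSucc <;> simp [hst]
  rfl

theorem eval₂_aRowPoly (w : Fin (N + 1) → ℝ) (μ : Fin N → ℕ) (α : Fin (N + 1) → ℕ)
    (s : Fin N → ℕ) :
    MvPolynomial.eval₂ (Nat.castRingHom ℝ) w (aRowPoly μ α s) = aRow w μ α s := by
  simp only [aRowPoly, aRow, dvalPoly, Dval,
    apply_ite (MvPolynomial.eval₂ (Nat.castRingHom ℝ) w), MvPolynomial.eval₂_add,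
    MvPolynomial.eval₂_sum, MvPolynomial.eval₂_X, MvPolynomial.eval₂_zero]

theorem aRow_of_last_ne_zero (w : Fin (N + 1) → ℝ) (μ : Fin N → ℕ) {α : Fin (N + 1) → ℕ}
    (hα : α (Fin.last N) ≠ 0) (s : Fin N → ℕ) :
    aRow w μ α s = if s = μ then w (Fin.last N) else 0 := by
  have hθ : ∀ r : Fin N, ¬∀ b : Fin (N + 1), (r : ℕ) < (b : ℕ) → α b = 0 :=
    fun r h => hα (h (Fin.last N) r.isLt)
  by_cases hs : s = μ
  · simp [hs, aRow, Dval]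
  · by_cases hμs : μ ≤ s
    · have hne : ¬∀ j, s j - μ j = 0 := fun h =>
        hs (le_antisymm (fun j => Nat.sub_eq_zero_iff_le.mp (h j)) hμs)
      simp [aRow, Dval, hμs, hs, hθ, hne]
    · simp [aRow, hμs, hs]

theorem aUnshift_aShift {w : Fin (N + 1) → ℝ} {μ : Fin N → ℕ} {α : Fin (N + 1) → ℕ}
    {s : Fin N → ℕ} (h : aRow w μ α s ≠ 0) : aUnshift μ α (aShift μ α s) = s := by
  have hμs : μ ≤ s := by
    by_contra hμs
    exact h (if_neg hμs)
  rw [aUnshift, aShift, add_tsub_cancel_right, tsub_add_cancel_of_le hμs]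

end OperatorA

section TraceOfProduct

variable {N L : ℕ} (μ : Fin L → Fin N → ℕ) (σ : Fin L → Fin (N + 1) → ℕ) (i₀ : Fin L)

/-- The row weights of the factors `A_{μ_i,σ_i}`, with the factor `w_n` taken out at `i₀`. -/
noncomputable def reducedRowPoly : Fin L → (Fin N → ℕ) → MvPolynomial (Fin (N + 1)) ℕ :=
  fun i x => if i = i₀ then (if x = μ i₀ then 1 else 0) else aRowPoly (μ i) (σ i) x

noncomputable def reducedDiagPoly (s : Fin N → ℕ) : MvPolynomial (Fin (N + 1)) ℕ :=
  if s = orbitEnd L (fun i => aShift (μ i) (σ i)) s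
  then orbitProd L (reducedRowPoly μ σ i₀) (fun i => aShift (μ i) (σ i)) s else 0

theorem matProd_Aent (w : Fin (N + 1) → ℝ) (s t : Fin N → ℕ) :
    matProd L (fun i => Aent N w (μ i) (σ i)) s t =
      if t = orbitEnd L (fun i => aShift (μ i) (σ i)) s
      then orbitProd L (fun i => aRow w (μ i) (σ i)) (fun i => aShift (μ i) (σ i)) s else 0 := by
  simp only [Aent_eq_funMat, matProd_funMat]
  congr

variable {μ σ i₀}

theorem matProd_Aent_diag (w : Fin (N + 1) → ℝ) (h : σ i₀ (Fin.last N) ≠ 0) (s : Fin N → ℕ) :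
    matProd L (fun i => Aent N w (μ i) (σ i)) s s =
      w (Fin.last N) * MvPolynomial.eval₂ (Nat.castRingHom ℝ) w (reducedDiagPoly μ σ i₀ s) := by
  have hrows : orbitProd L (fun i => aRow w (μ i) (σ i)) (fun i => aShift (μ i) (σ i)) s =
      w (Fin.last N) * orbitProd L
        (fun i x => MvPolynomial.eval₂ (Nat.castRingHom ℝ) w (reducedRowPoly μ σ i₀ i x))
        (fun i => aShift (μ i) (σ i)) s := by
    refine orbitProd_eq_mul _ (i₀ := i₀) (fun x => ?_) (fun i hi => funext fun x => ?_) s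
    · by_cases hx : x = μ i₀ <;> simp [reducedRowPoly, aRow_of_last_ne_zero w _ h, hx]
    · simp [reducedRowPoly, hi, eval₂_aRowPoly]
  rw [matProd_Aent, reducedDiagPoly, apply_ite (MvPolynomial.eval₂ _ w),
    ← MvPolynomial.coe_eval₂Hom, map_orbitProd, hrows]
  split_ifs <;> simp

theorem matProd_Aent_diag_eq_zero (w : Fin (N + 1) → ℝ) (h : σ i₀ (Fin.last N) ≠ 0)
    {s : Fin N → ℕ} (hs : s ≠ backOrbit L (fun i => aUnshift (μ i) (σ i)) i₀ (μ i₀)) :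
    matProd L (fun i => Aent N w (μ i) (σ i)) s s = 0 := by
  rw [matProd_Aent, ite_eq_right_iff]
  intro _
  by_contra hprod
  refine hs (eq_backOrbit_of_orbitProd_ne_zero (B := fun i => aUnshift (μ i) (σ i))
    (fun _ _ hx => aUnshift_aShift hx) ?_ hprod)
  intro x hx
  by_contra hxμ
  exact hx (by rw [aRow_of_last_ne_zero w _ h, if_neg hxμ])

end TraceOfProduct

theorem trace_divisible_by_wn_general (N L : ℕ)
    (μ : Fin L → (Fin N → ℕ)) (σ : Fin L → (Fin (N + 1) → ℕ))
    (hσ : 1 ≤ ∑ i, σ i (Fin.last N)) :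
    (∀ w : Fin (N + 1) → ℝ, (∀ a, 0 < w a) →
        Summable (fun s : Fin N → ℕ => matProd L (fun i => Aent N w (μ i) (σ i)) s s)) ∧
    ∃ Q : MvPolynomial (Fin (N + 1)) ℝ,
      (∀ d : (Fin (N + 1)) →₀ ℕ, ∃ c : ℕ, Q.coeff d = (c : ℝ)) ∧
      ∀ w : Fin (N + 1) → ℝ, (∀ a, 0 < w a) →
        matTrace (matProd L (fun i => Aent N w (μ i) (σ i)))
          = w (Fin.last N) * MvPolynomial.eval w Q := by
  obtain ⟨i₀, hi₀⟩ : ∃ i₀, σ i₀ (Fin.last N) ≠ 0 := by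
    by_contra! h
    simp [h] at hσ
  set s₀ := backOrbit L (fun i => aUnshift (μ i) (σ i)) i₀ (μ i₀)
  have hzero : ∀ w s, s ≠ s₀ → matProd L (fun i => Aent N w (μ i) (σ i)) s s = 0 :=
    fun w _ hs => matProd_Aent_diag_eq_zero w hi₀ hs
  refine ⟨fun w _ => summable_of_ne_finset_zero (s := {s₀}) fun s hs =>
      hzero w s (by simpa using hs),
    MvPolynomial.map (Nat.castRingHom ℝ) (reducedDiagPoly μ σ i₀ s₀),
    fun d => ⟨_, MvPolynomial.coeff_map _ _ _⟩, fun w _ => ?_⟩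
  rw [matTrace, tsum_eq_single s₀ (hzero w), matProd_Aent_diag w hi₀, MvPolynomial.eval_map]

/-- divisibility of the trace.  If at least one species-`n` particle is
present, `Σ_i σ_i^n ≥ 1`, then `Tr_{F^{⊗(n-1)}}(A^{(n)}_{μ_1,σ_1} ⋯ A^{(n)}_{μ_L,σ_L})` is
finite (summable) and, as a polynomial in `w_1,…,w_n` with nonnegative integer
coefficients, is divisible by `w_n`. -/
theorem trace_divisible_by_wn (N L : ℕ) (hN : 1 ≤ N) (hL : 1 ≤ L)
    (μ : Fin L → (Fin N → ℕ)) (σ : Fin L → (Fin (N + 1) → ℕ))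
    (hσ : 1 ≤ ∑ i, σ i (Fin.last N)) :
    (∀ w : Fin (N + 1) → ℝ, (∀ a, 0 < w a) →
        Summable (fun s : Fin N → ℕ => matProd L (fun i => Aent N w (μ i) (σ i)) s s)) ∧
    ∃ Q : MvPolynomial (Fin (N + 1)) ℝ,
      (∀ d : (Fin (N + 1)) →₀ ℕ, ∃ c : ℕ, Q.coeff d = (c : ℝ)) ∧
      ∀ w : Fin (N + 1) → ℝ, (∀ a, 0 < w a) →
        matTrace (matProd L (fun i => Aent N w (μ i) (σ i)))
          = w (Fin.last N) * MvPolynomial.eval w Q :=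
  trace_divisible_by_wn_general N L μ σ hσ

end ITAZRP
end

section
/- Weight is a genuine monomial: let a ≥ 2 and m_1,…,m_a ≥ 1, set ℓ_b = m_1+⋯+m_b. For any (a−1)-species configuration σ ∈ S(m_1,…,m_{a−1}) on ℤ_L and any x ∈ B_{ℓ_a}, after completing the pairing procedure of the embedding rule exactly m_a dots remain uncolored; consequently there is at least one i ∈ ℤ_L with η_i = w_a, hence the product η_1⋯η_L is divisible by w_a and ϖ_x(σ) = w_a^{−1}η_1⋯η_L is a monomial w_1^{p_1}⋯w_a^{p_a} with all p_j ∈ ℤ_{≥0}. -/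
open scoped BigOperators

namespace ITAZRP

/-!
Each particle colors exactly one dot: its H-line may run around the whole ring, and there are
at least as many dots as particles. Hence exactly `ℓ_a - ℓ_{a-1} = m_a` dots stay uncolored.
An H-line only passes through boxes all of whose dots are already colored, and colored dots
stay colored, so the border just left of a box that keeps an uncolored dot is never crossed.
That border contributes the factor `w_a` cancelling `w_a⁻¹`; every other factor is some `w_b`.
-/

open Finset

theorem prod_comp_eq_mul_prod_pow_card {ι κ M : Type*} [Fintype ι] [DecidableEq ι]
    [Fintype κ] [DecidableEq κ] [CommMonoid M] (f : κ → M) (g : ι → κ) (i₀ : ι) :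
    ∏ i, f (g i) = f (g i₀) * ∏ b, f b ^ #{i ∈ univ.erase i₀ | g i = b} := by
  rw [← mul_prod_erase univ _ (mem_univ i₀), ← prod_fiberwise' _ g f]
  simp_rw [prod_const]

section Cyclic

variable {L : ℕ} [NeZero L]

open Fin.NatCast Fin.CommRing

lemma csub_eq_sub (s : Fin L) (d : ℕ) : csub s d = s - (d : Fin L) := by
  simp only [csub, Fin.sub_def, Fin.ext_iff, Fin.val_natCast]
  rw [Nat.add_comm]

lemma exists_lt_csub_eq (s j : Fin L) : ∃ d < L, csub s d = j :=
  ⟨(s - j).val, (s - j).isLt, by rw [csub_eq_sub, Fin.cast_val_eq_self]; ring⟩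

lemma csub_pred_eq_of_csub_eq_csub_one {s j : Fin L} {e : ℕ} (he : 1 ≤ e)
    (h : csub s e = csub j 1) : csub s (e - 1) = j := by
  rw [csub_eq_sub s, csub_eq_sub j] at h
  rw [csub_eq_sub, Nat.cast_sub he]
  push_cast at h ⊢
  linear_combination h

end Cyclic

section Pairing

variable {L n : ℕ}

def findUncolored (st : PairState L n) (p : Fin L) : Option ℕ :=
  (List.range L).find? fun d => decide (0 < st.u (csub (csub p 1) d))

lemma step_of_findUncolored_eq_none {st : PairState L n} {p : Fin L}
    (h : findUncolored st p = none) (c : Fin n) : step st c p = st := by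
  rw [findUncolored] at h
  unfold step
  rw [h]

lemma step_u_of_findUncolored_eq_some {st : PairState L n} {p : Fin L} {d : ℕ}
    (h : findUncolored st p = some d) (c : Fin n) :
    (step st c p).u = Function.update st.u (csub (csub p 1) d) (st.u (csub (csub p 1) d) - 1) := by
  rw [findUncolored] at h
  unfold step
  rw [h]

open Classical in
lemma step_cross_of_findUncolored_eq_some {st : PairState L n} {p : Fin L} {d : ℕ}
    (h : findUncolored st p = some d) (c : Fin n) (j : Fin L) :
    (step st c p).cross j =
      if ∃ e ∈ Icc 1 d, j = csub (csub p 1) e then c ::ₘ st.cross j else st.cross j := by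
  rw [findUncolored] at h
  unfold step
  rw [h]

lemma exists_findUncolored_eq_some {st : PairState L n} (h : ∃ j, 0 < st.u j) (p : Fin L) :
    ∃ d, findUncolored st p = some d := by
  obtain ⟨j, hj⟩ := h
  have : NeZero L := ⟨j.pos.ne'⟩
  obtain ⟨d, hd, rfl⟩ := exists_lt_csub_eq (csub p 1) j
  rw [← Option.isSome_iff_exists, findUncolored, List.find?_isSome]
  exact ⟨d, List.mem_range.mpr hd, decide_eq_true hj⟩

lemma step_u_le (st : PairState L n) (c : Fin n) (p j : Fin L) :
    (step st c p).u j ≤ st.u j := by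
  cases h : findUncolored st p with
  | none => rw [step_of_findUncolored_eq_none h]
  | some d =>
    rw [step_u_of_findUncolored_eq_some h, Function.update_apply]
    split_ifs with hj
    · subst hj; omega
    · rfl

lemma sum_step_u_add_one {st : PairState L n} (h : ∃ j, 0 < st.u j) (c : Fin n) (p : Fin L) :
    ∑ j, (step st c p).u j + 1 = ∑ j, st.u j := by
  obtain ⟨d, hd⟩ := exists_findUncolored_eq_some h p
  have hpos : 0 < st.u (csub (csub p 1) d) := by
    simpa using List.find?_some hd
  rw [step_u_of_findUncolored_eq_some hd, sum_update_of_mem (mem_univ _),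
    sum_eq_sum_sdiff_singleton_add (mem_univ (csub (csub p 1) d)) st.u]
  omega

lemma step_cross_csub_one (st : PairState L n) (c : Fin n) (p : Fin L) {j : Fin L}
    (hj : 0 < (step st c p).u j) : (step st c p).cross (csub j 1) = st.cross (csub j 1) := by
  cases h : findUncolored st p with
  | none => rw [step_of_findUncolored_eq_none h]
  | some d =>
    have : NeZero L := ⟨p.pos.ne'⟩
    rw [step_cross_of_findUncolored_eq_some h, if_neg]
    rintro ⟨e, he, hcross⟩
    rw [mem_Icc] at he
    have hvisit : csub (csub p 1) (e - 1) = j :=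
      csub_pred_eq_of_csub_eq_csub_one he.1 hcross.symm
    have hfirst := (List.find?_range_eq_some.mp h).2.2 (e - 1) (by omega)
    rw [hvisit] at hfirst
    simp only [Bool.not_eq_true', decide_eq_false_iff_not, not_lt, Nat.le_zero] at hfirst
    have hle := step_u_le st c p j
    omega

lemma foldl_step_u_le (l : List (Fin n × Fin L)) (st : PairState L n) (j : Fin L) :
    (l.foldl (fun st bp => step st bp.1 bp.2) st).u j ≤ st.u j := by
  induction l generalizing st with
  | nil => rfl
  | cons a l ih => exact (ih _).trans (step_u_le st a.1 a.2 j)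

lemma sum_foldl_step_u_add_length (l : List (Fin n × Fin L)) {st : PairState L n}
    (h : l.length ≤ ∑ j, st.u j) :
    ∑ j, (l.foldl (fun st bp => step st bp.1 bp.2) st).u j + l.length = ∑ j, st.u j := by
  induction l generalizing st with
  | nil => simp
  | cons a l ih =>
    rw [List.length_cons] at h
    obtain ⟨j, -, hj⟩ := exists_ne_zero_of_sum_ne_zero (s := univ) (f := st.u) (by omega)
    have hstep := sum_step_u_add_one ⟨j, Nat.pos_of_ne_zero hj⟩ a.1 a.2
    have hrest := ih (st := step st a.1 a.2) (by omega)
    rw [List.foldl_cons, List.length_cons]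
    omega

lemma foldl_step_cross_csub_one (l : List (Fin n × Fin L)) (st : PairState L n) {j : Fin L}
    (hj : 0 < (l.foldl (fun st bp => step st bp.1 bp.2) st).u j) :
    (l.foldl (fun st bp => step st bp.1 bp.2) st).cross (csub j 1) = st.cross (csub j 1) := by
  induction l generalizing st with
  | nil => rfl
  | cons a l ih =>
    rw [List.foldl_cons] at hj ⊢
    rw [ih _ hj, step_cross_csub_one _ _ _ (hj.trans_le (foldl_step_u_le l _ j))]

end Pairing

section Run

variable {L n : ℕ}

lemma length_particleList (σ : Fin L → Multiset (Fin n)) :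
    (particleList n σ).length = ∑ b, ∑ i, (σ i).count b := by
  simp [particleList, List.length_flatMap, Fin.sum_univ_def]

lemma sum_runPairing_u_add_length {x : Fin L → ℕ} {σ : Fin L → Multiset (Fin n)}
    (h : (particleList n σ).length ≤ ∑ j, x j) :
    ∑ j, (runPairing x σ).u j + (particleList n σ).length = ∑ j, x j :=
  sum_foldl_step_u_add_length _ h

lemma runPairing_cross_csub_one {x : Fin L → ℕ} {σ : Fin L → Multiset (Fin n)} {j : Fin L}
    (hj : 0 < (runPairing x σ).u j) : (runPairing x σ).cross (csub j 1) = 0 :=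
  foldl_step_cross_csub_one _ _ hj

open Classical in
noncomputable def borderColor (a : Fin n) (x : Fin L → ℕ) (σ : Fin L → Multiset (Fin n))
    (i : Fin L) : Fin n :=
  if h : (runPairing x σ).cross i = 0 then a
  else msetMin ((runPairing x σ).cross i) (Multiset.toFinset_nonempty.mpr h)

lemma etaAt_eq_borderColor (a : Fin n) (w : Fin n → ℝ) (x : Fin L → ℕ)
    (σ : Fin L → Multiset (Fin n)) (i : Fin L) :
    etaAt a w x σ i = w (borderColor a x σ i) := by
  rw [etaAt, borderColor, apply_dite w]

lemma etaProd_eq_mul_prod_pow (a : Fin n) (w : Fin n → ℝ) {x : Fin L → ℕ}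
    {σ : Fin L → Multiset (Fin n)} {i₀ : Fin L} (h : (runPairing x σ).cross i₀ = 0) :
    etaProd a w x σ = w a * ∏ b, w b ^ #{i ∈ univ.erase i₀ | borderColor a x σ i = b} := by
  simp_rw [etaProd, etaAt_eq_borderColor]
  rw [prod_comp_eq_mul_prod_pow_card w _ i₀, borderColor, dif_pos h]

end Run

lemma length_particleList_add_last {A L : ℕ} {m : Fin (A + 1) → ℕ}
    {σ : Fin L → Multiset (Fin (A + 1))} (hσtop : ∀ i, ∀ c ∈ σ i, c ≠ Fin.last A)
    (hσ : ∀ b : Fin (A + 1), b ≠ Fin.last A → (∑ i, (σ i).count b) = m b) :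
    (particleList (A + 1) σ).length + m (Fin.last A) = ∑ b, m b := by
  have hlast : ∑ i, (σ i).count (Fin.last A) = 0 :=
    sum_eq_zero fun i _ => Multiset.count_eq_zero.mpr fun hc => hσtop i _ hc rfl
  rw [length_particleList, Fin.sum_univ_castSucc, Fin.sum_univ_castSucc, hlast, add_zero]
  congr 1
  exact sum_congr rfl fun b _ => hσ _ (Fin.castSucc_lt_last b).ne

theorem weight_is_monomial_general (A L : ℕ)
    (m : Fin (A + 1) → ℕ) (hm : ∀ b, 1 ≤ m b)
    (σ : Fin L → Multiset (Fin (A + 1)))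
    (hσtop : ∀ i, ∀ c ∈ σ i, c ≠ Fin.last A)
    (hσ : ∀ b : Fin (A + 1), b ≠ Fin.last A → (∑ i, (σ i).count b) = m b)
    (x : Fin L → ℕ) (hx : (∑ i, x i) = ∑ b, m b) :
    (∑ j, (runPairing x σ).u j) = m (Fin.last A) ∧
    (∃ i, (runPairing x σ).cross i = 0) ∧
    (∃ p : Fin (A + 1) → ℕ, ∀ w : Fin (A + 1) → ℝ, (∀ b, 0 < w b) →
        etaProd (Fin.last A) w x σ = w (Fin.last A) * ∏ b, w b ^ p b ∧
        varpiAt (Fin.last A) w x σ = ∏ b, w b ^ p b) := by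
  have hlen := length_particleList_add_last hσtop hσ
  have huncolored := sum_runPairing_u_add_length (x := x) (σ := σ) (by omega)
  have hsum : ∑ j, (runPairing x σ).u j = m (Fin.last A) := by omega
  obtain ⟨j, -, hj⟩ := exists_ne_zero_of_sum_ne_zero (s := univ) (f := (runPairing x σ).u)
    (by have := hm (Fin.last A); omega)
  have hfree := runPairing_cross_csub_one (Nat.pos_of_ne_zero hj)
  refine ⟨hsum, ⟨_, hfree⟩,
    fun b => #{i ∈ univ.erase (csub j 1) | borderColor (Fin.last A) x σ i = b}, fun w hw => ?_⟩
  have heta := etaProd_eq_mul_prod_pow (Fin.last A) w hfree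
  exact ⟨heta, by rw [varpiAt, heta, inv_mul_cancel_left₀ (hw _).ne']⟩

/-- Remark 4.2 (ii).  Let `a = A+1 ≥ 2` and `m_1,…,m_a ≥ 1`.  For an
`(a-1)`-species configuration `σ ∈ S(m_1,…,m_{a-1})` on `ℤ_L` and a multiline row
`x ∈ B_{ℓ_a}`, after the pairing procedure exactly `m_a` dots remain uncolored; hence some
border carries no H-line (so `η_i = w_a` there), the product `η_1⋯η_L` is divisible by
`w_a`, and `ϖ_x(σ) = w_a^{-1} η_1⋯η_L` is a genuine monomial `w_1^{p_1}⋯w_a^{p_a}` with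
nonnegative integer exponents. -/
theorem weight_is_monomial (A L : ℕ) (hA : 1 ≤ A) (hL : 1 ≤ L)
    (m : Fin (A + 1) → ℕ) (hm : ∀ b, 1 ≤ m b)
    (σ : Fin L → Multiset (Fin (A + 1)))
    (hσtop : ∀ i, ∀ c ∈ σ i, c ≠ Fin.last A)
    (hσ : ∀ b : Fin (A + 1), b ≠ Fin.last A → (∑ i, (σ i).count b) = m b)
    (x : Fin L → ℕ) (hx : (∑ i, x i) = ∑ b, m b) :
    (∑ j, (runPairing x σ).u j) = m (Fin.last A) ∧
    (∃ i, (runPairing x σ).cross i = 0) ∧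
    (∃ p : Fin (A + 1) → ℕ, ∀ w : Fin (A + 1) → ℝ, (∀ b, 0 < w b) →
        etaProd (Fin.last A) w x σ = w (Fin.last A) * ∏ b, w b ^ p b ∧
        varpiAt (Fin.last A) w x σ = ∏ b, w b ^ p b) :=
  weight_is_monomial_general A L m hm σ hσtop hσ x hx

end ITAZRP
end
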